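/- arXiv:2007.13179 — 7 statements merged into one kernel-verified Lean document; each statement's English description precedes it below -/
import Mathlib

section
/- Let α be a nonzero algebraic integer of degree d all of whose Galois conjugates have absolute value at most 2^B. Then for any b ∈ ℕ, the number k of conjugates α' of α with |α'| ≤ 2^{-b} satisfies k/d ≤ B/(B+b). -/
open scoped Classical

theorem stmt5 (α : ℂ) (hα : α ≠ 0) (P : Polynomial ℤ) (hmonic : P.Monic)
    (hirr : Irreducible P) (hroot : Polynomial.aeval α P = 0)
    (d : ℕ) (hd : P.natDegree = d) (B b : ℕ) (hBb : 0 < B + b)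
    (hbound : ∀ z ∈ (P.map (Int.castRingHom ℂ)).roots, ‖z‖ ≤ 2 ^ B) :
    ((Multiset.card ((P.map (Int.castRingHom ℂ)).roots.filter
        (fun z => ‖z‖ ≤ (2 : ℝ) ^ (-(b : ℤ))))) : ℝ) / d ≤ (B : ℝ) / (B + b) := by
  set Q : Polynomial ℂ := P.map (Int.castRingHom ℂ) with hQ
  have hPne : P ≠ 0 := hmonic.ne_zero
  have hQmonic : Q.Monic := hmonic.map _
  have hQne : Q ≠ 0 := hQmonic.ne_zero
  -- degree positivity
  have hdpos : 0 < d := by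
    rw [← hd]
    rcases Nat.eq_zero_or_pos P.natDegree with h0 | h
    · exact absurd ((hmonic.natDegree_eq_zero).mp h0 ▸ isUnit_one) hirr.not_isUnit
    · exact h
  -- card of roots = d
  have hsplits : Q.Splits := IsAlgClosed.splits Q
  have hcard : Multiset.card Q.roots = d := by
    have h1 : Multiset.card Q.roots = Q.natDegree := by
      have := hsplits.natDegree_eq_card_roots
      simpa using this.symm
    rw [h1, hQ, hmonic.natDegree_map, hd]
  -- constant coefficient nonzero
  have hc0 : P.coeff 0 ≠ 0 := by
    intro h
    have hX : Polynomial.X ∣ P := Polynomial.X_dvd_iff.mpr h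
    obtain ⟨c, hc⟩ := hX
    rcases hirr.isUnit_or_isUnit hc with hu | hu
    · exact Polynomial.not_isUnit_X hu
    · have := Polynomial.isUnit_iff.mp hu
      obtain ⟨r, hr, hrc⟩ := this
      have : Polynomial.aeval α P = algebraMap ℤ ℂ r * α := by
        rw [hc, ← hrc]; simp [mul_comm]
      rw [hroot] at this
      have hr0 : r ≠ 0 := by rintro rfl; simp at hrc; exact hPne (by rw [hc, ← hrc]; simp)
      have : (r : ℂ) * α = 0 := by simpa using this.symm
      rcases mul_eq_zero.mp this with h | h
      · exact hr0 (by exact_mod_cast h)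
      · exact hα h
  -- Q = ∏ (X - r)
  have hprodQ : (Q.roots.map (fun a => Polynomial.X - Polynomial.C a)).prod = Q :=
    Polynomial.prod_multiset_X_sub_C_of_monic_of_roots_card_eq hQmonic
      (by rw [hcard, hQ, hmonic.natDegree_map, hd])
  have heval : Q.eval 0 = ((P.coeff 0 : ℤ) : ℂ) := by
    simp [hQ, Polynomial.eval_map, Polynomial.eval₂_at_zero]
  have hone : 1 ≤ ‖Q.eval 0‖₊ := by
    rw [← NNReal.coe_le_coe, coe_nnnorm, NNReal.coe_one, heval, Complex.norm_intCast]
    exact_mod_cast Int.one_le_abs (by exact_mod_cast hc0)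
  have hprodnorm : ‖Q.eval 0‖₊ = (Q.roots.map (fun r => ‖r‖₊)).prod := by
    have h1 : Q.eval 0 = (Q.roots.map (fun a => -a)).prod := by
      conv_lhs => rw [← hprodQ]
      rw [Polynomial.eval_multiset_prod, Multiset.map_map]
      congr 1
      apply Multiset.map_congr rfl
      intro x _
      simp
    have key : ∀ s : Multiset ℂ, ‖s.prod‖₊ = (s.map (fun r => ‖r‖₊)).prod := by
      intro s
      induction s using Multiset.induction with
      | empty => simp
      | cons a s ih => simp [nnnorm_mul, ih]
    rw [h1, key, Multiset.map_map]
    congr 1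
    apply Multiset.map_congr rfl
    intro x _
    simp
  -- split roots
  set p : ℂ → Prop := fun z => ‖z‖ ≤ (2 : ℝ) ^ (-(b : ℤ)) with hp
  set k : ℕ := Multiset.card (Q.roots.filter p) with hk
  have hsplit : Q.roots.filter p + Q.roots.filter (fun z => ¬ p z) = Q.roots :=
    Multiset.filter_add_not p Q.roots
  have hkd : k ≤ d := by
    rw [← hcard]
    exact le_trans (Multiset.card_le_card (Multiset.filter_le p Q.roots)) le_rfl
  have hcard2 : Multiset.card (Q.roots.filter (fun z => ¬ p z)) = d - k := by
    have := congrArg Multiset.card hsplit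
    rw [Multiset.card_add, hcard] at this
    omega
  -- bound small part
  have hsmall : ((Q.roots.filter p).map (fun r => ‖r‖₊)).prod ≤ ((2 : NNReal) ^ (-(b:ℤ) : ℤ)) ^ k := by
    have h2 : ∀ x ∈ (Q.roots.filter p).map (fun r => ‖r‖₊), x ≤ (2 : NNReal) ^ (-(b:ℤ)) := by
      intro x hx
      obtain ⟨r, hr, rfl⟩ := Multiset.mem_map.mp hx
      have hpr : p r := (Multiset.mem_filter.mp hr).2
      rw [← NNReal.coe_le_coe, coe_nnnorm]
      rw [hp] at hpr
      simpa [NNReal.coe_zpow] using hpr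
    simpa [hk] using Multiset.prod_le_pow_card _ _ h2
  -- bound large part
  have hlarge : ((Q.roots.filter (fun z => ¬ p z)).map (fun r => ‖r‖₊)).prod
      ≤ ((2 : NNReal) ^ B) ^ (d - k) := by
    have h2 : ∀ x ∈ (Q.roots.filter (fun z => ¬ p z)).map (fun r => ‖r‖₊),
        x ≤ (2 : NNReal) ^ B := by
      intro x hx
      obtain ⟨r, hr, rfl⟩ := Multiset.mem_map.mp hx
      have := hbound r (Multiset.mem_of_mem_filter hr)
      rw [← NNReal.coe_le_coe, coe_nnnorm]
      simpa using this
    simpa [hcard2] using Multiset.prod_le_pow_card _ _ h2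
  -- combine
  have hmain : (1 : NNReal) ≤ ((2 : NNReal) ^ (-(b:ℤ))) ^ k * ((2 : NNReal) ^ B) ^ (d - k) := by
    calc (1 : NNReal) ≤ ‖Q.eval 0‖₊ := hone
      _ = (Q.roots.map (fun r => ‖r‖₊)).prod := hprodnorm
      _ = ((Q.roots.filter p).map (fun r => ‖r‖₊)).prod *
          ((Q.roots.filter (fun z => ¬ p z)).map (fun r => ‖r‖₊)).prod := by
            rw [← Multiset.prod_add, ← Multiset.map_add, hsplit]
      _ ≤ _ := mul_le_mul' hsmall hlarge
  -- convert to exponent inequality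
  have hzpow : (2 : NNReal) ^ (b * k) ≤ (2 : NNReal) ^ (B * (d - k)) := by
    have hx : ((2:NNReal) ^ (-(b:ℤ)))^k = ((2:NNReal)^(b*k))⁻¹ := by
      rw [zpow_neg, zpow_natCast, inv_pow, ← pow_mul]
    rw [hx] at hmain
    have h3 := mul_le_mul_right hmain ((2:NNReal)^(b*k))
    rw [mul_one, ← mul_assoc, mul_inv_cancel₀ (pow_ne_zero _ two_ne_zero), one_mul,
      ← pow_mul] at h3
    exact h3
  have hexp : b * k ≤ B * (d - k) :=
    (pow_le_pow_iff_right₀ (one_lt_two : (1:NNReal) < 2)).mp hzpow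
  -- final arithmetic
  have hnat : k * (B + b) ≤ B * d := by
    have hBd : B * (d - k) + B * k = B * d := by
      rw [← Nat.mul_add]
      congr 1
      omega
    calc k * (B + b) = B * k + b * k := by ring
      _ ≤ B * k + B * (d - k) := Nat.add_le_add_left hexp _
      _ = B * d := by rw [Nat.add_comm]; exact hBd
  rw [div_le_div_iff₀ (by exact_mod_cast hdpos) (by exact_mod_cast hBb)]
  push_cast
  calc (k : ℝ) * (B + b) = ((k * (B + b) : ℕ) : ℝ) := by push_cast; ring
    _ ≤ ((B * d : ℕ) : ℝ) := by exact_mod_cast hnat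
    _ = (B : ℝ) * d := by push_cast; ring
end

section
/- Let U = ℚ^m, V = ℚ^n, and let u_1,...,u_s ∈ U, v_1,...,v_s ∈ V. Define A = {a ∈ ℚ^s : Σ a_i u_i = 0}, B = {b ∈ ℚ^s : Σ b_i v_i = 0}, and C = {c ∈ ℚ^s : Σ c_i (u_i ⊗ v_i) = 0}. Then the orthogonal complement C^⊥ equals the span of all coordinatewise (Hadamard) products x ⊙ y with x ∈ A^⊥ and y ∈ B^⊥. -/
open LinearMap (BilinForm)

noncomputable def dotB (s : ℕ) : BilinForm ℚ (Fin s → ℚ) :=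
  LinearMap.mk₂ ℚ (fun x y => ∑ i, x i * y i)
    (fun x x' y => by simp [add_mul, Finset.sum_add_distrib])
    (fun a x y => by simp [Finset.mul_sum, mul_assoc])
    (fun x y y' => by simp [mul_add, Finset.sum_add_distrib])
    (fun a x y => by simp [Finset.mul_sum]; ring_nf; simp [mul_comm, mul_left_comm])

lemma dotB_apply (s : ℕ) (x y : Fin s → ℚ) : dotB s x y = ∑ i, x i * y i := rfl

lemma dotB_symm (s : ℕ) : (dotB s).IsSymm := by
  constructor; intro x y; simp [dotB_apply, mul_comm]

lemma dotB_refl (s : ℕ) : (dotB s).IsRefl := (dotB_symm s).isRefl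

lemma dotB_nondeg (s : ℕ) : (dotB s).Nondegenerate := by
  refine ⟨fun x hx => ?_, fun x hx => ?_⟩ <;> funext i
  · have := hx (Pi.single i 1)
    simpa [dotB_apply, Pi.single_apply, mul_comm] using this
  · have := hx (Pi.single i 1)
    simpa [dotB_apply, Pi.single_apply, mul_comm] using this

lemma orth_span (s : ℕ) (S : Set (Fin s → ℚ)) (x : Fin s → ℚ) :
    x ∈ (dotB s).orthogonal (Submodule.span ℚ S) ↔ ∀ g ∈ S, dotB s g x = 0 := by
  rw [LinearMap.BilinForm.mem_orthogonal_iff]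
  constructor
  · intro h g hg
    exact h g (Submodule.subset_span hg)
  · intro h n hn
    have : Submodule.span ℚ S ≤ LinearMap.ker ((dotB s).flip x) := by
      rw [Submodule.span_le]
      intro g hg
      simpa [LinearMap.mem_ker] using h g hg
    simpa [LinearMap.mem_ker] using this hn

lemma dotB_comm (s : ℕ) (x y : Fin s → ℚ) : dotB s x y = dotB s y x := by
  simp [dotB_apply, mul_comm]

lemma perp_of_orth_span (s : ℕ) (S : Set (Fin s → ℚ)) :
    {x : Fin s → ℚ | ∀ a ∈ ((dotB s).orthogonal (Submodule.span ℚ S) : Set (Fin s → ℚ)),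
      ∑ i, x i * a i = 0} = (Submodule.span ℚ S : Set (Fin s → ℚ)) := by
  ext x
  simp only [Set.mem_setOf_eq, SetLike.mem_coe]
  have : (∀ a ∈ (dotB s).orthogonal (Submodule.span ℚ S), ∑ i, x i * a i = 0) ↔
      x ∈ (dotB s).orthogonal ((dotB s).orthogonal (Submodule.span ℚ S)) := by
    rw [LinearMap.BilinForm.mem_orthogonal_iff]
    refine forall₂_congr fun a _ => ?_
    rw [← dotB_apply, dotB_comm]
  rw [this, LinearMap.BilinForm.orthogonal_orthogonal (dotB_nondeg s) (dotB_refl s)]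

theorem stmt6 (s m n : ℕ) (u : Fin s → Fin m → ℚ) (v : Fin s → Fin n → ℚ)
    (A : Set (Fin s → ℚ)) (hA : A = {a | ∑ i, a i • u i = 0})
    (B : Set (Fin s → ℚ)) (hB : B = {b | ∑ i, b i • v i = 0})
    (C : Set (Fin s → ℚ))
    (hC : C = {c | ∑ i, c i • (fun (j : Fin m) (k : Fin n) => u i j * v i k) = 0}) :
    {x : Fin s → ℚ | ∀ c ∈ C, ∑ i, x i * c i = 0} =
      ↑(Submodule.span ℚ {z : Fin s → ℚ | ∃ x y : Fin s → ℚ,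
        (∀ a ∈ A, ∑ i, x i * a i = 0) ∧ (∀ b ∈ B, ∑ i, y i * b i = 0) ∧
        z = fun i => x i * y i}) := by
  set W1 := Submodule.span ℚ (Set.range fun j => fun i => u i j) with hW1
  set W2 := Submodule.span ℚ (Set.range fun k => fun i => v i k) with hW2
  set W3 := Submodule.span ℚ
    (Set.range fun p : Fin m × Fin n => fun i => u i p.1 * v i p.2) with hW3
  -- A, B, C are orthogonals of W1, W2, W3
  have hAeq : A = ((dotB s).orthogonal W1 : Set _) := by
    rw [hA]; ext a
    simp only [Set.mem_setOf_eq, SetLike.mem_coe, hW1, orth_span,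
      Set.forall_mem_range, dotB_apply, funext_iff, Finset.sum_apply,
      Pi.smul_apply, smul_eq_mul, Pi.zero_apply]
    exact forall_congr' fun j => by rw [Finset.sum_congr rfl fun i _ => mul_comm (a i) (u i j)]
  have hBeq : B = ((dotB s).orthogonal W2 : Set _) := by
    rw [hB]; ext b
    simp only [Set.mem_setOf_eq, SetLike.mem_coe, hW2, orth_span,
      Set.forall_mem_range, dotB_apply, funext_iff, Finset.sum_apply,
      Pi.smul_apply, smul_eq_mul, Pi.zero_apply]
    exact forall_congr' fun k => by rw [Finset.sum_congr rfl fun i _ => mul_comm (b i) (v i k)]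
  have hCeq : C = ((dotB s).orthogonal W3 : Set _) := by
    rw [hC]; ext c
    simp only [Set.mem_setOf_eq, SetLike.mem_coe, hW3, orth_span,
      Set.forall_mem_range, dotB_apply, funext_iff, Finset.sum_apply,
      Pi.smul_apply, smul_eq_mul, Pi.zero_apply, Prod.forall]
    refine forall_congr' fun j => forall_congr' fun k => ?_
    rw [Finset.sum_congr rfl fun i (_ : i ∈ Finset.univ) =>
      mul_comm (c i) (u i j * v i k)]
  -- double orthogonals
  have hAperp : {x : Fin s → ℚ | ∀ a ∈ A, ∑ i, x i * a i = 0} = (W1 : Set _) := by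
    rw [hAeq, hW1]; exact perp_of_orth_span s _
  have hBperp : {x : Fin s → ℚ | ∀ b ∈ B, ∑ i, x i * b i = 0} = (W2 : Set _) := by
    rw [hBeq, hW2]; exact perp_of_orth_span s _
  have hCperp : {x : Fin s → ℚ | ∀ c ∈ C, ∑ i, x i * c i = 0} = (W3 : Set _) := by
    rw [hCeq, hW3]; exact perp_of_orth_span s _
  rw [hCperp]
  -- rewrite the Hadamard set
  have hZ : {z : Fin s → ℚ | ∃ x y : Fin s → ℚ,
      (∀ a ∈ A, ∑ i, x i * a i = 0) ∧ (∀ b ∈ B, ∑ i, y i * b i = 0) ∧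
      z = fun i => x i * y i} = {z | ∃ x ∈ W1, ∃ y ∈ W2, z = x * y} := by
    ext z
    simp only [Set.mem_setOf_eq]
    constructor
    · rintro ⟨x, y, hx, hy, rfl⟩
      refine ⟨x, ?_, y, ?_, rfl⟩
      · have : x ∈ {x : Fin s → ℚ | ∀ a ∈ A, ∑ i, x i * a i = 0} := hx
        rwa [hAperp] at this
      · have : y ∈ {y : Fin s → ℚ | ∀ b ∈ B, ∑ i, y i * b i = 0} := hy
        rwa [hBperp] at this
    · rintro ⟨x, hx, y, hy, rfl⟩
      refine ⟨x, y, ?_, ?_, rfl⟩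
      · have : x ∈ (W1 : Set _) := hx
        rw [← hAperp] at this; exact this
      · have : y ∈ (W2 : Set _) := hy
        rw [← hBperp] at this; exact this
  rw [hZ]
  -- W3 = span of products
  have main : W3 = Submodule.span ℚ {z : Fin s → ℚ | ∃ x ∈ W1, ∃ y ∈ W2, z = x * y} := by
    apply le_antisymm
    · rw [hW3, Submodule.span_le]
      rintro _ ⟨⟨j, k⟩, rfl⟩
      exact Submodule.subset_span ⟨_, Submodule.subset_span ⟨j, rfl⟩,
        _, Submodule.subset_span ⟨k, rfl⟩, rfl⟩
    · rw [Submodule.span_le]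
      rintro _ ⟨x, hx, y, hy, rfl⟩
      have key : ∀ y ∈ W2, ∀ x ∈ W1, x * y ∈ W3 := by
        intro y hy
        induction hy using Submodule.span_induction with
        | mem y hy =>
          intro x hx
          induction hx using Submodule.span_induction with
          | mem x hx =>
            obtain ⟨k, rfl⟩ := hy
            obtain ⟨j, rfl⟩ := hx
            exact Submodule.subset_span ⟨(j, k), rfl⟩
          | zero => simpa using zero_mem W3
          | add a b _ _ iha ihb => rw [add_mul]; exact add_mem iha ihb
          | smul r a _ ih => rw [smul_mul_assoc]; exact Submodule.smul_mem _ _ ih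
        | zero => intro x hx; simpa using zero_mem W3
        | add a b _ _ iha ihb =>
          intro x hx; rw [mul_add]; exact add_mem (iha x hx) (ihb x hx)
        | smul r a _ ih =>
          intro x hx; rw [mul_smul_comm]; exact Submodule.smul_mem _ _ (ih x hx)
      exact key y hy x hx
  rw [main]
end

section
/- Let n = n₁n₂ with n₁, n₂ coprime positive integers, and let k₁ < ... < k_s be nonnegative integers. Define V_m^k = {a ∈ ℚ^s : Σ_{i=1}^s a_i ζ_m^{k_i} = 0} for a primitive m-th root of unity ζ_m. Then (V_n^k)^⊥ = span{ x ⊙ y : x ∈ (V_{n₁}^k)^⊥, y ∈ (V_{n₂}^k)^⊥ }, where ⊙ is the coordinatewise product on ℚ^s. -/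
open Polynomial Finset Submodule

namespace Stmt7Aux

noncomputable def prSum (m a : ℕ) : ℂ := ∑ ξ ∈ primitiveRoots m ℂ, ξ ^ a

lemma exists_rat_prSum {m : ℕ} (hm : m ≠ 0) (a : ℕ) : ∃ q : ℚ, (q : ℂ) = prSum m a := by
  have hm' : 0 < m := Nat.pos_of_ne_zero hm
  set m' : ℕ+ := ⟨m, hm'⟩ with hm'def
  haveI : IsCyclotomicExtension {(m' : ℕ)} ℚ (CyclotomicField m' ℚ) :=
    CyclotomicField.isCyclotomicExtension _ _
  have hζ : IsPrimitiveRoot (IsCyclotomicExtension.zeta m' ℚ (CyclotomicField m' ℚ)) (m' : ℕ) :=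
    IsCyclotomicExtension.zeta_spec m' ℚ (CyclotomicField m' ℚ)
  have hirr : Irreducible (cyclotomic (m' : ℕ) ℚ) := cyclotomic.irreducible_rat m'.pos
  haveI : FiniteDimensional ℚ (CyclotomicField m' ℚ) :=
    IsCyclotomicExtension.finiteDimensional {(m' : ℕ)} ℚ (CyclotomicField m' ℚ)
  set ζ : CyclotomicField m' ℚ := IsCyclotomicExtension.zeta m' ℚ (CyclotomicField m' ℚ)
  refine ⟨Algebra.trace ℚ (CyclotomicField m' ℚ) (ζ ^ a), ?_⟩
  have h1 : (algebraMap ℚ ℂ) (Algebra.trace ℚ (CyclotomicField m' ℚ) (ζ ^ a)) =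
      ∑ σ : CyclotomicField m' ℚ →ₐ[ℚ] ℂ, σ (ζ ^ a) :=
    trace_eq_sum_embeddings ℂ
  have h2 : ((Algebra.trace ℚ (CyclotomicField m' ℚ) (ζ ^ a) : ℚ) : ℂ) =
      algebraMap ℚ ℂ (Algebra.trace ℚ (CyclotomicField m' ℚ) (ζ ^ a)) :=
    (eq_ratCast (algebraMap ℚ ℂ) _).symm
  have h3 : ∑ σ : CyclotomicField m' ℚ →ₐ[ℚ] ℂ, σ (ζ ^ a) =
      ∑ ξ : primitiveRoots (m' : ℕ) ℂ, (ξ : ℂ) ^ a := by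
    refine Fintype.sum_equiv (IsPrimitiveRoot.embeddingsEquivPrimitiveRoots (n := m') hζ ℂ hirr)
      _ _ fun σ => ?_
    rw [map_pow]
    congr 1
  rw [h2, h1, h3, prSum]
  exact Finset.sum_coe_sort (primitiveRoots m ℂ) (fun ξ => ξ ^ a)

noncomputable def rq (m a : ℕ) : ℚ := by
  classical exact if h : ∃ q : ℚ, (q : ℂ) = prSum m a then h.choose else 0

lemma rq_spec {m : ℕ} (hm : m ≠ 0) (a : ℕ) : ((rq m a : ℚ) : ℂ) = prSum m a := by
  unfold rq
  rw [dif_pos (exists_rat_prSum hm a)]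
  exact (exists_rat_prSum hm a).choose_spec


lemma conj_sum {m : ℕ} (hm : m ≠ 0) {s : ℕ} (k : Fin s → ℕ) (a : Fin s → ℚ) {ζ ξ : ℂ}
    (hζ : IsPrimitiveRoot ζ m) (hξ : IsPrimitiveRoot ξ m)
    (h : ∑ i, (a i : ℂ) * ζ ^ k i = 0) : ∑ i, (a i : ℂ) * ξ ^ k i = 0 := by
  have key : ∀ z : ℂ, (aeval z (∑ i, C (a i) * X ^ k i : ℚ[X])) = ∑ i, (a i : ℂ) * z ^ k i := by
    intro z
    rw [map_sum]
    refine Finset.sum_congr rfl fun i _ => ?_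
    rw [map_mul, map_pow, aeval_C, aeval_X, eq_ratCast]
  have h1 : minpoly ℚ ζ ∣ ∑ i, C (a i) * X ^ k i := minpoly.dvd ℚ ζ (by rw [key]; exact h)
  obtain ⟨q, hq⟩ := h1
  rw [← key, hq, ← cyclotomic_eq_minpoly_rat hζ (Nat.pos_of_ne_zero hm),
      cyclotomic_eq_minpoly_rat hξ (Nat.pos_of_ne_zero hm), map_mul, minpoly.aeval, zero_mul]

lemma pow_modEq {ξ : ℂ} {m : ℕ} (h1 : ξ ^ m = 1) {a b : ℕ} (hab : a ≡ b [MOD m]) :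
    ξ ^ a = ξ ^ b := by
  have hab' : a % m = b % m := hab
  conv_lhs => rw [← Nat.div_add_mod a m]
  conv_rhs => rw [← Nat.div_add_mod b m]
  rw [pow_add, pow_add, pow_mul, pow_mul, h1, one_pow, one_pow, hab']

lemma isPrimitiveRoot_mul {n₁ n₂ : ℕ} (hco : Nat.Coprime n₁ n₂) {ξ₁ ξ₂ : ℂ}
    (h1 : IsPrimitiveRoot ξ₁ n₁) (h2 : IsPrimitiveRoot ξ₂ n₂) :
    IsPrimitiveRoot (ξ₁ * ξ₂) (n₁ * n₂) := by
  have hc : (orderOf ξ₁).Coprime (orderOf ξ₂) := by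
    rw [← h1.eq_orderOf, ← h2.eq_orderOf]; exact hco
  have horder := (Commute.all ξ₁ ξ₂).orderOf_mul_eq_mul_orderOf_of_coprime hc
  have h := IsPrimitiveRoot.orderOf (ξ₁ * ξ₂)
  rwa [horder, ← h1.eq_orderOf, ← h2.eq_orderOf] at h

lemma isPrimitiveRoot_pow_of {n₁ n₂ e : ℕ} {ξ : ℂ}
    (hξ : IsPrimitiveRoot ξ (n₁ * n₂)) (he1 : Nat.Coprime n₁ e) (he2 : n₂ ∣ e) :
    IsPrimitiveRoot (ξ ^ e) n₁ := by
  constructor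
  · rw [← pow_mul, hξ.pow_eq_one_iff_dvd]
    obtain ⟨c, rfl⟩ := he2
    exact ⟨c, by ring⟩
  · intro l hl
    rw [← pow_mul] at hl
    have hd : n₁ * n₂ ∣ e * l := hξ.dvd_of_pow_eq_one _ hl
    have h3 : n₁ ∣ e * l := dvd_trans (Dvd.intro n₂ rfl) hd
    exact (Nat.Coprime.dvd_of_dvd_mul_left he1 h3)

lemma coprime_of_modEq_one {n e : ℕ} (h : e ≡ 1 [MOD n]) : Nat.Coprime n e := by
  have h' : e % n = 1 % n := h
  unfold Nat.Coprime
  rw [Nat.gcd_rec, h', ← Nat.gcd_rec, Nat.gcd_one_right]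

lemma prSum_mul {n₁ n₂ : ℕ} (h₁ : n₁ ≠ 0) (h₂ : n₂ ≠ 0) (hco : Nat.Coprime n₁ n₂) (a : ℕ) :
    prSum (n₁ * n₂) a = prSum n₁ a * prSum n₂ a := by
  have hp₁ : 0 < n₁ := Nat.pos_of_ne_zero h₁
  have hp₂ : 0 < n₂ := Nat.pos_of_ne_zero h₂
  have hpn : 0 < n₁ * n₂ := Nat.mul_pos hp₁ hp₂
  obtain ⟨e₁, he₁⟩ := Nat.chineseRemainder hco 1 0
  obtain ⟨e₂, he₂⟩ := Nat.chineseRemainder hco 0 1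
  have hcop1 : Nat.Coprime n₁ e₁ := coprime_of_modEq_one he₁.1
  have hcop2 : Nat.Coprime n₂ e₂ := coprime_of_modEq_one he₂.2
  have hdvd1 : n₂ ∣ e₁ := (Nat.modEq_zero_iff_dvd).mp he₁.2
  have hdvd2 : n₁ ∣ e₂ := (Nat.modEq_zero_iff_dvd).mp he₂.1
  rw [prSum, prSum, prSum, Finset.sum_mul_sum, ← Finset.sum_product']
  refine (Finset.sum_nbij' (fun p => p.1 * p.2) (fun ξ => (ξ ^ e₁, ξ ^ e₂)) ?_ ?_ ?_ ?_ ?_).symm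
  · rintro ⟨ξ₁, ξ₂⟩ hp
    rw [Finset.mem_product] at hp
    rw [mem_primitiveRoots hpn]
    exact isPrimitiveRoot_mul hco ((mem_primitiveRoots hp₁).mp hp.1)
      ((mem_primitiveRoots hp₂).mp hp.2)
  · intro ξ hξ
    rw [mem_primitiveRoots hpn] at hξ
    rw [Finset.mem_product, mem_primitiveRoots hp₁, mem_primitiveRoots hp₂]
    constructor
    · exact isPrimitiveRoot_pow_of hξ hcop1 hdvd1
    · exact isPrimitiveRoot_pow_of (by rwa [Nat.mul_comm] at hξ) hcop2 hdvd2
  · rintro ⟨ξ₁, ξ₂⟩ hp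
    rw [Finset.mem_product] at hp
    have hone1 : ξ₁ ^ n₁ = 1 := ((mem_primitiveRoots hp₁).mp hp.1).pow_eq_one
    have hone2 : ξ₂ ^ n₂ = 1 := ((mem_primitiveRoots hp₂).mp hp.2).pow_eq_one
    have e1 : (ξ₁ * ξ₂) ^ e₁ = ξ₁ := by
      rw [mul_pow, pow_modEq hone1 he₁.1, pow_modEq hone2 he₁.2, pow_one, pow_zero, mul_one]
    have e2 : (ξ₁ * ξ₂) ^ e₂ = ξ₂ := by
      rw [mul_pow, pow_modEq hone1 he₂.1, pow_modEq hone2 he₂.2, pow_one, pow_zero, one_mul]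
    simp [e1, e2]
  · intro ξ hξ
    rw [mem_primitiveRoots hpn] at hξ
    have hone : ξ ^ (n₁ * n₂) = 1 := hξ.pow_eq_one
    have hmod : e₁ + e₂ ≡ 1 [MOD n₁ * n₂] := by
      rw [← Nat.modEq_and_modEq_iff_modEq_mul hco]
      constructor
      · simpa using Nat.ModEq.add he₁.1 he₂.1
      · simpa using Nat.ModEq.add he₁.2 he₂.2
    calc ξ ^ e₁ * ξ ^ e₂ = ξ ^ (e₁ + e₂) := by rw [pow_add]
      _ = ξ ^ 1 := pow_modEq hone hmod
      _ = ξ := pow_one ξ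
  · rintro ⟨ξ₁, ξ₂⟩ _
    exact (mul_pow ξ₁ ξ₂ a).symm


variable {s : ℕ}

noncomputable def perpM (U : Submodule ℚ (Fin s → ℚ)) : Submodule ℚ (Fin s → ℚ) :=
  (U.map ((Pi.basisFun ℚ (Fin s)).toDualEquiv : (Fin s → ℚ) →ₗ[ℚ] Module.Dual ℚ (Fin s → ℚ))).dualCoannihilator

lemma toDual_apply (x y : Fin s → ℚ) :
    (Pi.basisFun ℚ (Fin s)).toDualEquiv x y = ∑ i, x i * y i := by
  have h : (Pi.basisFun ℚ (Fin s)).toDualEquiv x y = (Pi.basisFun ℚ (Fin s)).toDual x y := rfl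
  rw [h]
  conv_lhs => rw [← (Pi.basisFun ℚ (Fin s)).sum_repr x]
  rw [map_sum, LinearMap.sum_apply]
  refine Finset.sum_congr rfl fun i _ => ?_
  rw [map_smul, LinearMap.smul_apply, Module.Basis.toDual_apply_right, Pi.basisFun_repr,
    Pi.basisFun_repr, smul_eq_mul]

lemma mem_perpM {U : Submodule ℚ (Fin s → ℚ)} {x : Fin s → ℚ} :
    x ∈ perpM U ↔ ∀ c ∈ U, ∑ i, c i * x i = 0 := by
  rw [perpM, Submodule.mem_dualCoannihilator]
  constructor
  · intro h c hc
    have := h _ (Submodule.mem_map_of_mem hc)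
    rwa [LinearEquiv.coe_coe, toDual_apply] at this
  · rintro h φ ⟨c, hc, rfl⟩
    rw [LinearEquiv.coe_coe, toDual_apply]
    exact h c hc

lemma perpM_antitone {U U' : Submodule ℚ (Fin s → ℚ)} (h : U ≤ U') : perpM U' ≤ perpM U := by
  intro x hx
  rw [mem_perpM] at hx ⊢
  exact fun c hc => hx c (h hc)

lemma perpM_perpM (U : Submodule ℚ (Fin s → ℚ)) : perpM (perpM U) = U := by
  have hmap : (perpM U).map ((Pi.basisFun ℚ (Fin s)).toDualEquiv :
      (Fin s → ℚ) →ₗ[ℚ] Module.Dual ℚ (Fin s → ℚ)) = U.dualAnnihilator := by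
    ext φ
    simp only [Submodule.mem_map, Submodule.mem_dualAnnihilator]
    constructor
    · rintro ⟨y, hy, rfl⟩ w hw
      rw [LinearEquiv.coe_coe, toDual_apply]
      have h0 := mem_perpM.mp hy w hw
      rw [← h0]
      exact Finset.sum_congr rfl fun i _ => mul_comm _ _
    · intro h
      refine ⟨(Pi.basisFun ℚ (Fin s)).toDualEquiv.symm φ, ?_, by simp⟩
      rw [mem_perpM]
      intro c hc
      calc ∑ i, c i * ((Pi.basisFun ℚ (Fin s)).toDualEquiv.symm φ) i
          = (Pi.basisFun ℚ (Fin s)).toDualEquiv c ((Pi.basisFun ℚ (Fin s)).toDualEquiv.symm φ) :=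
            (toDual_apply _ _).symm
        _ = (Pi.basisFun ℚ (Fin s)).toDualEquiv ((Pi.basisFun ℚ (Fin s)).toDualEquiv.symm φ) c := by
            rw [toDual_apply, toDual_apply]
            exact Finset.sum_congr rfl fun i _ => mul_comm _ _
        _ = φ c := by rw [LinearEquiv.apply_symm_apply]
        _ = 0 := h c hc
  show ((perpM (perpM U)) : Submodule ℚ (Fin s → ℚ)) = U
  rw [perpM, hmap, Subspace.dualAnnihilator_dualCoannihilator_eq]

lemma mem_perpM_span {S : Set (Fin s → ℚ)} {x : Fin s → ℚ} :
    x ∈ perpM (span ℚ S) ↔ ∀ c ∈ S, ∑ i, c i * x i = 0 := by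
  rw [mem_perpM]
  constructor
  · exact fun h c hc => h c (subset_span hc)
  · intro h c hc
    induction hc using Submodule.span_induction with
    | mem c hc => exact h c hc
    | zero => simp
    | add c d _ _ hc hd => simp only [Pi.add_apply, add_mul, Finset.sum_add_distrib, hc, hd, add_zero]
    | smul r c _ hc => simp only [Pi.smul_apply, smul_eq_mul, mul_assoc, ← Finset.mul_sum, hc, mul_zero]


-- core lemmas, to be appended to base (inside namespace)
section Core
open Polynomial Finset

-- easy direction core
lemma easy_core {m : ℕ} (hm : m ≠ 0) {s : ℕ} (k : Fin s → ℕ) (c : Fin s → ℚ)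
    (hc : ∑ i, (c i : ℂ) * Complex.exp (2 * Real.pi * Complex.I / m) ^ k i = 0) (t : ℕ) :
    ∑ i, rq m (t + k i) * c i = 0 := by
  have hζ : IsPrimitiveRoot (Complex.exp (2 * Real.pi * Complex.I / m)) m :=
    Complex.isPrimitiveRoot_exp m hm
  have hC : ((∑ i, rq m (t + k i) * c i : ℚ) : ℂ) = 0 := by
    push_cast
    calc ∑ i, (rq m (t + k i) : ℂ) * (c i : ℂ)
        = ∑ i, ∑ ξ ∈ primitiveRoots m ℂ, ξ ^ t * ((c i : ℂ) * ξ ^ k i) := by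
          refine Finset.sum_congr rfl fun i _ => ?_
          rw [rq_spec hm, prSum, Finset.sum_mul]
          refine Finset.sum_congr rfl fun ξ _ => ?_
          rw [pow_add]; ring
      _ = ∑ ξ ∈ primitiveRoots m ℂ, ξ ^ t * (∑ i, (c i : ℂ) * ξ ^ k i) := by
          rw [Finset.sum_comm]
          exact Finset.sum_congr rfl fun ξ _ => (Finset.mul_sum _ _ _).symm
      _ = 0 := by
          refine Finset.sum_eq_zero fun ξ hξ' => ?_
          rw [conj_sum hm k c hζ ((mem_primitiveRoots (Nat.pos_of_ne_zero hm)).mp hξ') hc,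
            mul_zero]
  exact_mod_cast hC

-- hard direction core
lemma hard_core {m : ℕ} (hm : m ≠ 0) {s : ℕ} (k : Fin s → ℕ) (a : Fin s → ℚ)
    (h : ∀ t : ℕ, ∑ i, rq m (t + k i) * a i = 0) :
    ∑ i, (a i : ℂ) * Complex.exp (2 * Real.pi * Complex.I / m) ^ k i = 0 := by
  set ζ : ℂ := Complex.exp (2 * Real.pi * Complex.I / m) with hζdef
  have hζ : IsPrimitiveRoot ζ m := Complex.isPrimitiveRoot_exp m hm
  have hmpos : 0 < m := Nat.pos_of_ne_zero hm
  set S : ℂ → ℂ := fun ξ => ∑ i, (a i : ℂ) * ξ ^ k i with hS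
  have hT : ∀ t : ℕ, ∑ ξ ∈ primitiveRoots m ℂ, ξ ^ t * S ξ = 0 := by
    intro t
    have hc : ((∑ i, rq m (t + k i) * a i : ℚ) : ℂ) = 0 := by rw [h t]; norm_num
    push_cast at hc
    rw [← hc]
    calc ∑ ξ ∈ primitiveRoots m ℂ, ξ ^ t * S ξ
        = ∑ ξ ∈ primitiveRoots m ℂ, ∑ i, ξ ^ t * ((a i : ℂ) * ξ ^ k i) := by
          exact Finset.sum_congr rfl fun ξ _ => (Finset.mul_sum _ _ _)
      _ = ∑ i, ∑ ξ ∈ primitiveRoots m ℂ, ξ ^ t * ((a i : ℂ) * ξ ^ k i) := Finset.sum_comm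
      _ = ∑ i, (rq m (t + k i) : ℂ) * (a i : ℂ) := by
          refine Finset.sum_congr rfl fun i _ => ?_
          rw [rq_spec hm, prSum, Finset.sum_mul]
          refine Finset.sum_congr rfl fun ξ _ => ?_
          rw [pow_add]; ring
  have key : ∑ ξ ∈ primitiveRoots m ℂ, S ξ * (∑ t ∈ Finset.range m, (ζ ^ (m - 1) * ξ) ^ t) = 0 := by
    calc ∑ ξ ∈ primitiveRoots m ℂ, S ξ * (∑ t ∈ Finset.range m, (ζ ^ (m - 1) * ξ) ^ t)
        = ∑ ξ ∈ primitiveRoots m ℂ, ∑ t ∈ Finset.range m, (ζ ^ (m - 1)) ^ t * (ξ ^ t * S ξ) := by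
          refine Finset.sum_congr rfl fun ξ _ => ?_
          rw [Finset.mul_sum]
          refine Finset.sum_congr rfl fun t _ => ?_
          rw [mul_pow]; ring
      _ = ∑ t ∈ Finset.range m, (ζ ^ (m - 1)) ^ t * ∑ ξ ∈ primitiveRoots m ℂ, ξ ^ t * S ξ := by
          rw [Finset.sum_comm]
          exact Finset.sum_congr rfl fun t _ => (Finset.mul_sum _ _ _).symm
      _ = 0 := by
          refine Finset.sum_eq_zero fun t _ => ?_
          rw [hT t, mul_zero]
  have hζne : ζ ≠ 0 := hζ.ne_zero hm
  have hζpowne : ζ ^ (m - 1) ≠ 0 := pow_ne_zero _ hζne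
  have hζm : ζ ^ m = 1 := hζ.pow_eq_one
  have hsingle : ∑ ξ ∈ primitiveRoots m ℂ, S ξ * (∑ t ∈ Finset.range m, (ζ ^ (m - 1) * ξ) ^ t)
      = S ζ * m := by
    rw [Finset.sum_eq_single_of_mem ζ ((mem_primitiveRoots hmpos).mpr hζ)]
    · have : ζ ^ (m - 1) * ζ = 1 := by
        rw [← pow_succ, Nat.sub_add_cancel hmpos, hζm]
      rw [this]
      simp
    · intro ξ hξmem hne
      have hξprim : IsPrimitiveRoot ξ m := (mem_primitiveRoots hmpos).mp hξmem
      have hz1 : ζ ^ (m - 1) * ξ ≠ 1 := by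
        intro hz
        apply hne
        have h2 : ζ ^ (m - 1) * ζ = 1 := by
          rw [← pow_succ, Nat.sub_add_cancel hmpos, hζm]
        exact mul_left_cancel₀ hζpowne (hz.trans h2.symm)
      have hzm : (ζ ^ (m - 1) * ξ) ^ m = 1 := by
        rw [mul_pow, ← pow_mul, mul_comm (m-1) m, pow_mul, hζm, one_pow, hξprim.pow_eq_one,
          one_mul]
      rw [geom_sum_eq hz1, hzm, sub_self, zero_div, mul_zero]
  have hfin : S ζ * m = 0 := hsingle.symm.trans key
  have hmne : (m : ℂ) ≠ 0 := Nat.cast_ne_zero.mpr hm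
  have := mul_eq_zero.mp hfin
  tauto

-- cross term core
lemma cross_core {n₁ n₂ : ℕ} (h₁ : n₁ ≠ 0) (h₂ : n₂ ≠ 0) (hco : Nat.Coprime n₁ n₂) {s : ℕ}
    (k : Fin s → ℕ) (c : Fin s → ℚ)
    (hc : ∑ i, (c i : ℂ) * Complex.exp (2 * Real.pi * Complex.I / (n₁ * n₂ : ℕ)) ^ k i = 0)
    (t t' : ℕ) :
    ∑ i, (rq n₁ (t + k i) * rq n₂ (t' + k i)) * c i = 0 := by
  have hn : (n₁ * n₂ : ℕ) ≠ 0 := Nat.mul_ne_zero h₁ h₂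
  have hζ : IsPrimitiveRoot (Complex.exp (2 * Real.pi * Complex.I / (n₁ * n₂ : ℕ))) (n₁ * n₂) :=
    Complex.isPrimitiveRoot_exp _ hn
  have hC : ((∑ i, (rq n₁ (t + k i) * rq n₂ (t' + k i)) * c i : ℚ) : ℂ) = 0 := by
    push_cast
    calc ∑ i, (rq n₁ (t + k i) : ℂ) * (rq n₂ (t' + k i) : ℂ) * (c i : ℂ)
        = ∑ i, ∑ ξ₁ ∈ primitiveRoots n₁ ℂ, ∑ ξ₂ ∈ primitiveRoots n₂ ℂ,
            ξ₁ ^ t * ξ₂ ^ t' * ((c i : ℂ) * (ξ₁ * ξ₂) ^ k i) := by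
          refine Finset.sum_congr rfl fun i _ => ?_
          rw [rq_spec h₁, rq_spec h₂, prSum, prSum, Finset.sum_mul, Finset.sum_mul]
          refine Finset.sum_congr rfl fun ξ₁ _ => ?_
          rw [Finset.mul_sum, Finset.sum_mul]
          refine Finset.sum_congr rfl fun ξ₂ _ => ?_
          rw [pow_add, pow_add, mul_pow]; ring
      _ = ∑ ξ₁ ∈ primitiveRoots n₁ ℂ, ∑ i, ∑ ξ₂ ∈ primitiveRoots n₂ ℂ,
            ξ₁ ^ t * ξ₂ ^ t' * ((c i : ℂ) * (ξ₁ * ξ₂) ^ k i) := Finset.sum_comm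
      _ = ∑ ξ₁ ∈ primitiveRoots n₁ ℂ, ∑ ξ₂ ∈ primitiveRoots n₂ ℂ, ∑ i,
            ξ₁ ^ t * ξ₂ ^ t' * ((c i : ℂ) * (ξ₁ * ξ₂) ^ k i) := by
          exact Finset.sum_congr rfl fun ξ₁ _ => Finset.sum_comm
      _ = 0 := by
          refine Finset.sum_eq_zero fun ξ₁ hξ₁ => Finset.sum_eq_zero fun ξ₂ hξ₂ => ?_
          have p1 : IsPrimitiveRoot ξ₁ n₁ :=
            (mem_primitiveRoots (Nat.pos_of_ne_zero h₁)).mp hξ₁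
          have p2 : IsPrimitiveRoot ξ₂ n₂ :=
            (mem_primitiveRoots (Nat.pos_of_ne_zero h₂)).mp hξ₂
          have hmul : IsPrimitiveRoot (ξ₁ * ξ₂) (n₁ * n₂) := isPrimitiveRoot_mul hco p1 p2
          have hzero : ∑ i, (c i : ℂ) * (ξ₁ * ξ₂) ^ k i = 0 := conj_sum hn k c hζ hmul hc
          calc ∑ i, ξ₁ ^ t * ξ₂ ^ t' * ((c i : ℂ) * (ξ₁ * ξ₂) ^ k i)
              = ξ₁ ^ t * ξ₂ ^ t' * ∑ i, (c i : ℂ) * (ξ₁ * ξ₂) ^ k i := (Finset.mul_sum _ _ _).symm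
            _ = 0 := by rw [hzero, mul_zero]
  exact_mod_cast hC

end Core

lemma rq_mul {n₁ n₂ : ℕ} (h₁ : n₁ ≠ 0) (h₂ : n₂ ≠ 0) (hco : Nat.Coprime n₁ n₂) (a : ℕ) :
    rq (n₁ * n₂) a = rq n₁ a * rq n₂ a := by
  have : ((rq (n₁ * n₂) a : ℚ) : ℂ) = ((rq n₁ a * rq n₂ a : ℚ) : ℂ) := by
    push_cast
    rw [rq_spec (Nat.mul_ne_zero h₁ h₂), rq_spec h₁, rq_spec h₂, prSum_mul h₁ h₂ hco]
  exact_mod_cast this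

end Stmt7Aux

open Submodule

theorem stmt7 (s n₁ n₂ : ℕ) (h₁ : 0 < n₁) (h₂ : 0 < n₂) (hco : Nat.Coprime n₁ n₂)
    (k : Fin s → ℕ) (hk : StrictMono k)
    (V : ℕ → Set (Fin s → ℚ))
    (hV : ∀ m : ℕ, V m =
      {a | ∑ i, (a i : ℂ) * Complex.exp (2 * Real.pi * Complex.I / m) ^ (k i) = 0}) :
    {x : Fin s → ℚ | ∀ c ∈ V (n₁ * n₂), ∑ i, x i * c i = 0} =
      ↑(Submodule.span ℚ {z : Fin s → ℚ | ∃ x y : Fin s → ℚ,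
        (∀ a ∈ V n₁, ∑ i, x i * a i = 0) ∧ (∀ b ∈ V n₂, ∑ i, y i * b i = 0) ∧
        z = fun i => x i * y i}) := by
  have hn : (n₁ * n₂ : ℕ) ≠ 0 := Nat.mul_ne_zero h₁.ne' h₂.ne'
  set G : ℕ → ℕ → (Fin s → ℚ) := fun m t i => Stmt7Aux.rq m (t + k i) with hG
  have hmem : ∀ (m : ℕ) (a : Fin s → ℚ), a ∈ V m ↔
      ∑ i, (a i : ℂ) * Complex.exp (2 * Real.pi * Complex.I / m) ^ k i = 0 := by
    intro m a; rw [hV m]; exact Iff.rfl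
  have hhard : ∀ m : ℕ, m ≠ 0 →
      Stmt7Aux.perpM (span ℚ (V m)) ≤ span ℚ (Set.range (G m)) := by
    intro m hm
    have h1 : Stmt7Aux.perpM (span ℚ (Set.range (G m))) ≤ span ℚ (V m) := by
      intro a ha
      refine Submodule.subset_span ?_
      rw [hmem]
      refine Stmt7Aux.hard_core hm k a fun t => ?_
      exact Stmt7Aux.mem_perpM_span.mp ha (G m t) ⟨t, rfl⟩
    have h2 := Stmt7Aux.perpM_antitone h1
    rwa [Stmt7Aux.perpM_perpM] at h2
  have heasy : ∀ m : ℕ, m ≠ 0 → ∀ t : ℕ, ∀ c ∈ V m, ∑ i, G m t i * c i = 0 := by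
    intro m hm t c hc
    exact Stmt7Aux.easy_core hm k c ((hmem m c).mp hc) t
  ext x
  simp only [Set.mem_setOf_eq, SetLike.mem_coe]
  constructor
  · intro hx
    have hx' : x ∈ Stmt7Aux.perpM (span ℚ (V (n₁ * n₂))) := by
      rw [Stmt7Aux.mem_perpM_span]
      intro c hc
      rw [← hx c hc]
      exact Finset.sum_congr rfl fun i _ => mul_comm _ _
    have hx2 := hhard _ hn hx'
    refine Submodule.span_le.mpr ?_ hx2
    rintro z ⟨t, rfl⟩
    refine Submodule.subset_span ⟨G n₁ t, G n₂ t, ?_, ?_, ?_⟩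
    · exact fun a ha => heasy n₁ h₁.ne' t a ha
    · exact fun b hb => heasy n₂ h₂.ne' t b hb
    · funext i
      exact Stmt7Aux.rq_mul h₁.ne' h₂.ne' hco _
  · intro hx c hc
    have hcC := (hmem _ c).mp hc
    induction hx using Submodule.span_induction with
    | mem z hz =>
        obtain ⟨x', y', hx', hy', rfl⟩ := hz
        have hx'' : x' ∈ span ℚ (Set.range (G n₁)) := by
          apply hhard n₁ h₁.ne'
          rw [Stmt7Aux.mem_perpM_span]
          intro a ha
          rw [← hx' a ha]
          exact Finset.sum_congr rfl fun i _ => mul_comm _ _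
        have hy'' : y' ∈ span ℚ (Set.range (G n₂)) := by
          apply hhard n₂ h₂.ne'
          rw [Stmt7Aux.mem_perpM_span]
          intro b hb
          rw [← hy' b hb]
          exact Finset.sum_congr rfl fun i _ => mul_comm _ _
        clear hx' hy'
        show ∑ i, x' i * y' i * c i = 0
        induction hx'' using Submodule.span_induction with
        | mem u hu =>
            induction hy'' using Submodule.span_induction with
            | mem v hv =>
                obtain ⟨t, rfl⟩ := hu
                obtain ⟨t', rfl⟩ := hv
                have hcross := Stmt7Aux.cross_core h₁.ne' h₂.ne' hco k c hcC t t'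
                rw [← hcross]
            | zero => simp
            | add v w _ _ hv hw =>
                simp only [Pi.add_apply, mul_add, add_mul, Finset.sum_add_distrib, hv, hw,
                  add_zero]
            | smul r v _ hv =>
                simp only [Pi.smul_apply, smul_eq_mul]
                calc ∑ i, u i * (r * v i) * c i = r * ∑ i, u i * v i * c i := by
                      rw [Finset.mul_sum]; exact Finset.sum_congr rfl fun i _ => by ring
                  _ = 0 := by rw [hv, mul_zero]
        | zero => simp
        | add u w _ _ hu hw =>
            simp only [Pi.add_apply, add_mul, Finset.sum_add_distrib, hu, hw, add_zero]
        | smul r u _ hu =>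
            simp only [Pi.smul_apply, smul_eq_mul]
            calc ∑ i, r * u i * y' i * c i = r * ∑ i, u i * y' i * c i := by
                  rw [Finset.mul_sum]; exact Finset.sum_congr rfl fun i _ => by ring
              _ = 0 := by rw [hu, mul_zero]
    | zero => simp
    | add u w _ _ hu hw =>
        simp only [Pi.add_apply, add_mul, Finset.sum_add_distrib, hu, hw, add_zero]
    | smul r u _ hu =>
        simp only [Pi.smul_apply, smul_eq_mul]
        calc ∑ i, r * u i * c i = r * ∑ i, u i * c i := by
              rw [Finset.mul_sum]; exact Finset.sum_congr rfl fun i _ => by ring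
          _ = 0 := by rw [hu, mul_zero]
end

section
/- Let f(x) = Σ_{i=1}^s a_i x^{k_i} ∈ ℚ[x] with 0 ≤ k₁ < ... < k_s < n, and suppose every prime divisor p of n satisfies p > s. If f(ζ_n) = 0 then a_1 = ... = a_s = 0. -/
open Finset Polynomial

lemma geom_orth (p : ℕ) (hp : 0 < p) (ω : ℂ)
    (hω : ∀ k : ℕ, ω ^ k = 1 ↔ p ∣ k) (k : ℕ) :
    ∑ t ∈ range p, ω ^ (k * t) = if p ∣ k then (p : ℂ) else 0 := by
  have hrw : ∀ t, ω ^ (k * t) = (ω ^ k) ^ t := fun t => by rw [pow_mul]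
  simp_rw [hrw]
  by_cases h : p ∣ k
  · rw [if_pos h, (hω k).2 h]
    simp
  · rw [if_neg h]
    have hx1 : ω ^ k ≠ 1 := fun hh => h ((hω k).1 hh)
    rw [geom_sum_eq hx1]
    have h2 : (ω ^ k) ^ p = 1 := by
      rw [← pow_mul, hω]; exact ⟨k, mul_comm k p⟩
    rw [h2]
    simp

lemma core (p : ℕ) (hp : 0 < p) (ω : ℂ)
    (hω : ∀ k : ℕ, ω ^ k = 1 ↔ p ∣ k)
    (d : ℕ → ℂ) (t₀ : ℕ)
    (H : ∀ t, t < p → t ≠ t₀ → ∑ r ∈ range p, d r * ω ^ (r * t) = 0) :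
    ∀ r', r' < p → (p : ℂ) * d r' =
      (if t₀ < p then ω ^ ((p - r') * t₀) * ∑ r ∈ range p, d r * ω ^ (r * t₀) else 0) := by
  intro r' hr'
  have key : ∑ t ∈ (range p).erase t₀,
      ω ^ ((p - r') * t) * ∑ r ∈ range p, d r * ω ^ (r * t) = 0 :=
    Finset.sum_eq_zero fun t ht => by
      rw [H t (mem_range.1 (mem_of_mem_erase ht)) (ne_of_mem_erase ht), mul_zero]
  have expand : ∀ t, ω ^ ((p - r') * t) * ∑ r ∈ range p, d r * ω ^ (r * t)
      = ∑ r ∈ range p, d r * ω ^ ((r + (p - r')) * t) := by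
    intro t
    rw [Finset.mul_sum]
    refine Finset.sum_congr rfl fun r _ => ?_
    rw [add_mul, pow_add]
    ring
  have full : ∑ t ∈ range p, ω ^ ((p - r') * t) * ∑ r ∈ range p, d r * ω ^ (r * t)
      = (p : ℂ) * d r' := by
    simp_rw [expand]
    rw [Finset.sum_comm]
    have : ∀ r ∈ range p, ∑ t ∈ range p, d r * ω ^ ((r + (p - r')) * t)
        = if r = r' then (p : ℂ) * d r else 0 := by
      intro r hr
      rw [← Finset.mul_sum, geom_orth p hp ω hω]
      have : p ∣ (r + (p - r')) ↔ r = r' := by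
        constructor
        · intro ⟨c, hc⟩
          have hrp := mem_range.1 hr
          have hc1 : c = 1 := by
            rcases c with _ | _ | c
            · omega
            · rfl
            · exfalso
              have h2 : p * 2 ≤ p * (c + 1 + 1) := Nat.mul_le_mul_left p (by omega)
              omega
          subst hc1
          omega
        · rintro rfl
          exact ⟨1, by omega⟩
      by_cases h : r = r'
      · rw [if_pos h, if_pos (this.2 h)]; ring
      · rw [if_neg h, if_neg (fun hh => h (this.1 hh)), mul_zero]
    rw [Finset.sum_congr rfl this, Finset.sum_ite_eq' (range p) r']
    rw [if_pos (mem_range.2 hr')]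
  by_cases ht : t₀ < p
  · rw [if_pos ht]
    have := Finset.add_sum_erase (range p)
      (fun t => ω ^ ((p - r') * t) * ∑ r ∈ range p, d r * ω ^ (r * t)) (mem_range.2 ht)
    rw [key, add_zero] at this
    rw [← full, ← this]
  · rw [if_neg ht]
    rw [← full, ← key, Finset.erase_eq_of_notMem (fun hh => ht (mem_range.1 hh))]

lemma conj_vanish {n : ℕ} (hn : 0 < n) (b : ℕ → ℚ) (ζ : ℂ) (hζ : IsPrimitiveRoot ζ n)
    (h : ∑ j ∈ range n, (b j : ℂ) * ζ ^ j = 0) (u : ℕ) (hu : Nat.Coprime u n) :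
    ∑ j ∈ range n, (b j : ℂ) * ζ ^ (u * j) = 0 := by
  set P : Polynomial ℚ := ∑ j ∈ range n, C (b j) * X ^ j with hP
  have haev : ∀ x : ℂ, aeval x P = ∑ j ∈ range n, (b j : ℂ) * x ^ j := by
    intro x
    rw [hP, map_sum]
    refine Finset.sum_congr rfl fun j _ => ?_
    simp [Algebra.smul_def]
  have hdvd : minpoly ℚ ζ ∣ P := minpoly.dvd ℚ ζ (by rw [haev]; exact h)
  have hcyc : cyclotomic n ℚ = minpoly ℚ ζ := cyclotomic_eq_minpoly_rat hζ hn
  have hζu : IsPrimitiveRoot (ζ ^ u) n := hζ.pow_of_coprime u hu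
  have hcyc' : cyclotomic n ℚ = minpoly ℚ (ζ ^ u) := cyclotomic_eq_minpoly_rat hζu hn
  obtain ⟨Q, hQ⟩ := hdvd
  have : aeval (ζ ^ u) P = 0 := by
    rw [hQ, map_mul, ← hcyc, hcyc', minpoly.aeval, zero_mul]
  rw [haev] at this
  simpa only [pow_mul] using this

lemma reindex (p m : ℕ) (hp : 0 < p) (f : ℕ → ℂ) :
    ∑ j ∈ range (p * m), f j = ∑ r ∈ range p, ∑ q ∈ range m, f (p * q + r) := by
  rw [← Finset.sum_product']
  refine Finset.sum_nbij' (fun j => (j % p, j / p)) (fun x => p * x.2 + x.1) ?_ ?_ ?_ ?_ ?_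
  · intro j hj
    have hj := mem_range.1 hj
    refine Finset.mem_product.2 ⟨mem_range.2 (Nat.mod_lt _ hp), mem_range.2 ?_⟩
    exact Nat.div_lt_of_lt_mul (by omega)
  · intro x hx
    obtain ⟨h1, h2⟩ := Finset.mem_product.1 hx
    have h1 := mem_range.1 h1
    have h2 := mem_range.1 h2
    refine mem_range.2 ?_
    calc p * x.2 + x.1 < p * x.2 + p := by omega
      _ = p * (x.2 + 1) := by ring
      _ ≤ p * m := Nat.mul_le_mul_left p (by omega)
  · intro j _
    exact Nat.div_add_mod j p
  · intro x hx
    obtain ⟨h1, h2⟩ := Finset.mem_product.1 hx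
    have h1 := mem_range.1 h1
    ext
    · simp [Nat.add_mul_mod_self_left, Nat.mul_add_mod, Nat.mod_eq_of_lt h1]
    · simp [Nat.mul_add_div hp, Nat.div_eq_of_lt h1]
  · intro j _
    simp only []
    rw [Nat.div_add_mod j p]

lemma key_lemma : ∀ n : ℕ, 0 < n → ∀ b : ℕ → ℚ,
    (∀ j, n ≤ j → b j = 0) →
    (∀ p : ℕ, p.Prime → p ∣ n → (((range n).filter fun j => b j ≠ 0).card < p)) →
    ∀ ζ : ℂ, IsPrimitiveRoot ζ n →
    (∑ j ∈ range n, (b j : ℂ) * ζ ^ j) = 0 → ∀ j, b j = 0 := by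
  intro n
  induction n using Nat.strong_induction_on with
  | _ n IH =>
  intro hn b hbs hcard ζ hζ hsum j
  by_cases hj : j < n
  swap
  · exact hbs j (by omega)
  rcases eq_or_lt_of_le (show 1 ≤ n from hn) with h1 | h1
  · -- n = 1
    have hj0 : j = 0 := by omega
    subst hj0
    rw [← h1] at hsum
    simp only [range_one, sum_singleton, pow_zero, mul_one] at hsum
    exact_mod_cast hsum
  -- 1 < n
  have hpp : Nat.Prime n.minFac := Nat.minFac_prime (by omega)
  obtain ⟨m, hnm⟩ : n.minFac ∣ n := Nat.minFac_dvd n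
  set p := n.minFac with hpdef
  have hp0 : 0 < p := hpp.pos
  have hp2 : 2 ≤ p := hpp.two_le
  have hm0 : 0 < m := by
    rcases Nat.eq_zero_or_pos m with h | h
    · subst h; simp at hnm; omega
    · exact h
  have hmn : m < n := by
    have : 2 * m ≤ p * m := Nat.mul_le_mul_right m hp2
    omega
  have hζm : IsPrimitiveRoot (ζ ^ p) m := hζ.pow hn hnm
  have hωprim : IsPrimitiveRoot (ζ ^ m) p := hζ.pow hn (by rw [hnm, mul_comm])
  have hω : ∀ k, (ζ ^ m) ^ k = 1 ↔ p ∣ k := fun k => hωprim.pow_eq_one_iff_dvd k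
  set d : ℕ → ℂ := fun r => ζ ^ r * ∑ q ∈ range m, (b (p * q + r) : ℂ) * (ζ ^ p) ^ q with hd
  -- the conjugate relations
  have hrel : ∀ t, Nat.Coprime (1 + m * t) n →
      ∑ r ∈ range p, d r * (ζ ^ m) ^ (r * t) = 0 := by
    intro t hcop
    have h0 := conj_vanish hn b ζ hζ hsum (1 + m * t) hcop
    rw [hnm, reindex p m hp0] at h0
    rw [← h0]
    refine Finset.sum_congr rfl fun r _ => ?_
    rw [hd]
    simp only []
    rw [mul_comm (ζ ^ r) _, mul_assoc, Finset.sum_mul]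
    refine Finset.sum_congr rfl fun q _ => ?_
    rw [mul_assoc]
    congr 1
    have harith : (1 + m * t) * (p * q + r) = p * q + r + (p * m) * (t * q) + m * (r * t) := by
      ring
    rw [harith, pow_add, pow_add, pow_add, ← hnm, pow_mul ζ p q, pow_mul ζ n (t * q),
      pow_mul ζ m (r * t), hζ.pow_eq_one, one_pow]
    ring
  -- coprimality of 1 + m * t with n for suitable t
  have hcop_m : ∀ t : ℕ, Nat.Coprime (1 + m * t) m := by
    intro t
    exact (Nat.coprime_add_mul_left_left 1 m t).2 (Nat.coprime_one_left m)
  have hcop : ∀ t, ¬ p ∣ (1 + m * t) → Nat.Coprime (1 + m * t) n := by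
    intro t hpt
    rw [hnm]
    exact Nat.Coprime.mul_right (((Nat.Prime.coprime_iff_not_dvd hpp).2 hpt).symm) (hcop_m t)
  have hζne : ζ ≠ 0 := hζ.ne_zero hn.ne'
  have hpCne : (p : ℂ) ≠ 0 := Nat.cast_ne_zero.2 hp0.ne'
  -- show all d r = 0 for r < p
  have hdzero : ∀ r, r < p → d r = 0 := by
    by_cases hpm : p ∣ m
    · -- every 1 + m * t is coprime to n
      intro r hr
      have hext := core p hp0 (ζ ^ m) hω d p (fun t ht _ => hrel t (hcop t (by
        intro hdvd
        have h1 : p ∣ m * t := hpm.mul_right t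
        have h2 : p ∣ 1 := by simpa using Nat.dvd_sub hdvd h1
        have h3 := Nat.le_of_dvd one_pos h2
        omega))) r hr
      rw [if_neg (lt_irrefl p)] at hext
      exact (mul_eq_zero.1 hext).resolve_left hpCne
    · haveI : Fact p.Prime := ⟨hpp⟩
      haveI : NeZero p := ⟨hp0.ne'⟩
      have hm_ne : (m : ZMod p) ≠ 0 := by
        rw [Ne, ZMod.natCast_eq_zero_iff]
        exact hpm
      set x : ZMod p := -(m : ZMod p)⁻¹ with hx
      set t₀ := x.val with ht₀
      have ht₀lt : t₀ < p := ZMod.val_lt x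
      have hdvd_t₀ : p ∣ 1 + m * t₀ := by
        rw [← ZMod.natCast_eq_zero_iff]
        push_cast
        rw [ht₀, ZMod.natCast_zmod_val, hx, mul_neg, mul_inv_cancel₀ hm_ne]
        ring
      have huniq : ∀ t, t < p → t ≠ t₀ → ¬ p ∣ 1 + m * t := by
        intro t ht hne hdvd
        apply hne
        have h1 : ((1 + m * t : ℕ) : ZMod p) = 0 :=
          (ZMod.natCast_eq_zero_iff _ _).2 hdvd
        push_cast at h1
        have h2 : (t : ZMod p) = x := by
          have h3 : (m : ZMod p) * x = -1 := by rw [hx, mul_neg, mul_inv_cancel₀ hm_ne]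
          have h4 : (m : ZMod p) * t = -1 := by linear_combination h1
          exact mul_left_cancel₀ hm_ne (by rw [h3, h4])
        calc t = ((t : ZMod p)).val := (ZMod.val_cast_of_lt ht).symm
          _ = t₀ := by rw [h2, ht₀]
      -- pigeonhole: some residue class r₀ is empty
      have hfcard : ((range n).filter fun j' => b j' ≠ 0).card < p :=
        hcard p hpp ⟨m, hnm⟩
      have hr₀ : ∃ r₀, r₀ < p ∧ ∀ q, b (p * q + r₀) = 0 := by
        by_contra hcon
        push_neg at hcon
        have hsurj : Set.SurjOn (fun j' => j' % p)
            ((range n).filter fun j' => b j' ≠ 0) (range p) := by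
          intro r hr
          obtain ⟨q, hq⟩ := hcon r (mem_range.1 (by exact hr))
          have hjn : p * q + r < n := by
            by_contra hge
            exact hq (hbs _ (by omega))
          refine ⟨p * q + r, ?_, ?_⟩
          · simp [mem_filter, mem_range, hjn, hq]
          · simp [Nat.mul_add_mod, Nat.mod_eq_of_lt (mem_range.1 (by exact hr))]
        have := Finset.card_le_card_of_surjOn _ hsurj
        simp only [card_range] at this
        omega
      obtain ⟨r₀, hr₀lt, hr₀z⟩ := hr₀
      have hd₀ : d r₀ = 0 := by
        simp only [hd]
        rw [Finset.sum_eq_zero fun q _ => by rw [hr₀z q]; simp, mul_zero]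
      have hext := core p hp0 (ζ ^ m) hω d t₀
        (fun t ht htne => hrel t (hcop t (huniq t ht htne)))
      have hS : ∑ r ∈ range p, d r * (ζ ^ m) ^ (r * t₀) = 0 := by
        have h0 := hext r₀ hr₀lt
        rw [if_pos ht₀lt, hd₀, mul_zero] at h0
        have hωne : ((ζ ^ m) ^ ((p - r₀) * t₀)) ≠ 0 := pow_ne_zero _ (pow_ne_zero m hζne)
        exact (mul_eq_zero.1 h0.symm).resolve_left hωne
      intro r hr
      have h0 := hext r hr
      rw [if_pos ht₀lt, hS, mul_zero] at h0
      exact (mul_eq_zero.1 h0).resolve_left hpCne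
  -- each inner sum vanishes, apply induction hypothesis
  have hcr : ∀ r, r < p → ∑ q ∈ range m, ((fun q => b (p * q + r)) q : ℂ) * (ζ ^ p) ^ q = 0 := by
    intro r hr
    have h0 := hdzero r hr
    simp only [hd] at h0
    rcases mul_eq_zero.1 h0 with h | h
    · exact absurd h (pow_ne_zero r hζne)
    · exact h
  have hfin : ∀ r, r < p → ∀ q, b (p * q + r) = 0 := by
    intro r hr
    refine IH m hmn hm0 (fun q => b (p * q + r)) ?_ ?_ (ζ ^ p) hζm (hcr r hr)
    · intro q hq
      refine hbs _ ?_
      calc n = p * m := hnm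
        _ ≤ p * q := Nat.mul_le_mul_left p hq
        _ ≤ p * q + r := Nat.le_add_right _ _
    · intro ℓ hℓp hℓm
      have hℓn : ℓ ∣ n := hℓm.trans ⟨p, by rw [hnm, mul_comm]⟩
      refine lt_of_le_of_lt ?_ (hcard ℓ hℓp hℓn)
      refine Finset.card_le_card_of_injOn (fun q => p * q + r) ?_ ?_
      · intro q hq
        rw [Finset.mem_coe, mem_filter] at hq ⊢
        obtain ⟨hq1, hq2⟩ := hq
        have hqm := mem_range.1 hq1
        constructor
        · refine mem_range.2 ?_
          calc p * q + r < p * q + p := by omega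
            _ = p * (q + 1) := (Nat.mul_succ p q).symm
            _ ≤ p * m := Nat.mul_le_mul_left p (by omega)
            _ = n := hnm.symm
        · exact hq2
      · intro q1 _ q2 _ heq
        simp only [] at heq
        exact Nat.eq_of_mul_eq_mul_left hp0 (Nat.add_right_cancel heq)
  have := hfin (j % p) (Nat.mod_lt j hp0) (j / p)
  rwa [Nat.div_add_mod j p] at this

theorem stmt10 (n s : ℕ) (hn : 0 < n) (a : Fin s → ℚ) (k : Fin s → ℕ)
    (hk : StrictMono k) (hlt : ∀ i, k i < n)
    (hp : ∀ p : ℕ, p.Prime → p ∣ n → s < p)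
    (h : ∑ i, (a i : ℂ) * Complex.exp (2 * Real.pi * Complex.I / n) ^ (k i) = 0) :
    ∀ i, a i = 0 := by
  classical
  intro i
  set ζ : ℂ := Complex.exp (2 * Real.pi * Complex.I / n) with hζdef
  have hζ : IsPrimitiveRoot ζ n := Complex.isPrimitiveRoot_exp n hn.ne'
  have hkinj : Function.Injective k := hk.injective
  set b : ℕ → ℚ := fun j => if hex : ∃ i, k i = j then a hex.choose else 0 with hb
  have hbk : ∀ i, b (k i) = a i := by
    intro i
    simp only [hb]
    rw [dif_pos ⟨i, rfl⟩]
    exact congrArg a (hkinj (Exists.choose_spec (⟨i, rfl⟩ : ∃ i', k i' = k i)))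
  have hbs : ∀ j, n ≤ j → b j = 0 := by
    intro j hj
    simp only [hb]
    rw [dif_neg]
    rintro ⟨i, rfl⟩
    exact absurd (hlt i) (by omega)
  have hsupp : ((Finset.range n).filter fun j => b j ≠ 0) ⊆
      (Finset.univ : Finset (Fin s)).image k := by
    intro j hj
    rw [Finset.mem_filter] at hj
    obtain ⟨_, hbj⟩ := hj
    by_contra hjmem
    apply hbj
    simp only [hb]
    rw [dif_neg]
    rintro ⟨i, rfl⟩
    exact hjmem (Finset.mem_image.2 ⟨i, Finset.mem_univ i, rfl⟩)
  have hcard : ∀ p : ℕ, p.Prime → p ∣ n →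
      (((Finset.range n).filter fun j => b j ≠ 0).card < p) := by
    intro p hppr hpd
    have h1 := Finset.card_le_card hsupp
    have h2 : ((Finset.univ : Finset (Fin s)).image k).card ≤ s :=
      Finset.card_image_le.trans (by simp)
    exact lt_of_le_of_lt (h1.trans h2) (hp p hppr hpd)
  have hsum : ∑ j ∈ Finset.range n, (b j : ℂ) * ζ ^ j = 0 := by
    have himg : (Finset.univ : Finset (Fin s)).image k ⊆ Finset.range n := by
      intro j hj
      obtain ⟨i, _, rfl⟩ := Finset.mem_image.1 hj
      exact Finset.mem_range.2 (hlt i)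
    have hzero : ∀ j ∈ Finset.range n, j ∉ (Finset.univ : Finset (Fin s)).image k →
        (b j : ℂ) * ζ ^ j = 0 := by
      intro j _ hjmem
      have : b j = 0 := by
        simp only [hb]
        rw [dif_neg]
        rintro ⟨i, rfl⟩
        exact hjmem (Finset.mem_image.2 ⟨i, Finset.mem_univ i, rfl⟩)
      rw [this]
      simp
    rw [← Finset.sum_subset himg hzero,
      Finset.sum_image (fun i _ i' _ hh => hkinj hh)]
    rw [← h]
    exact Finset.sum_congr rfl fun i _ => by rw [hbk]
  have hfin := key_lemma n hn b hbs hcard ζ hζ hsum (k i)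
  rw [hbk i] at hfin
  exact hfin
end

section
/- Let p be prime and e ≥ 1. If 0 ≤ ℓ₁ < ... < ℓ_s < p^e and fewer than p of the ℓ_j fall in any residue class mod p^{e−1} (in particular, if s < p), then the set {ζ_{p^e}^{ℓ₁}, ..., ζ_{p^e}^{ℓ_s}} is linearly independent over ℚ. -/
open Polynomial Finset

theorem stmt11 (p e s : ℕ) (hp : p.Prime) (he : 1 ≤ e) (l : Fin s → ℕ)
    (hmono : StrictMono l) (hlt : ∀ i, l i < p ^ e)
    (hres : ∀ i, (Finset.univ.filter
        (fun j => l j % p ^ (e - 1) = l i % p ^ (e - 1))).card < p) :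
    LinearIndependent ℚ (fun i : Fin s =>
      Complex.exp (2 * Real.pi * Complex.I / (p ^ e)) ^ (l i)) := by
  have hp1 : 1 < p := hp.one_lt
  set q := p ^ (e - 1) with hq
  have hq0 : 0 < q := pow_pos hp.pos _
  have hqp : q * p = p ^ e := by
    rw [hq, ← pow_succ]
    congr 1
    omega
  have h3 : q * (p - 1) + q = p ^ e := by
    rw [← hqp, ← Nat.mul_succ]
    congr 1
    omega
  have hpe0 : p ^ e ≠ 0 := (pow_pos hp.pos e).ne'
  set ζ : ℂ := Complex.exp (2 * Real.pi * Complex.I / (p ^ e)) with hζ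
  have hprim : IsPrimitiveRoot ζ (p ^ e) := by
    have h := Complex.isPrimitiveRoot_exp (p ^ e) hpe0
    rw [hζ]
    push_cast at h ⊢
    exact h
  rw [Fintype.linearIndependent_iff]
  intro c hc i0
  by_contra hci
  set P : ℚ[X] := ∑ j, C (c j) * X ^ (l j) with hP
  have hcoeffP : ∀ m, P.coeff m = ∑ j, if l j = m then c j else 0 := by
    intro m
    rw [hP, finset_sum_coeff]
    refine Finset.sum_congr rfl fun j _ => ?_
    rw [coeff_C_mul, coeff_X_pow]
    by_cases h : l j = m
    · simp [h]
    · simp [h, Ne.symm h]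
  have hcoeffl : ∀ j, P.coeff (l j) = c j := by
    intro j
    rw [hcoeffP, Finset.sum_eq_single j]
    · simp
    · intro b _ hb
      have : l b ≠ l j := fun h => hb (hmono.injective h)
      simp [this]
    · simp
  have haeval : aeval ζ P = 0 := by
    rw [hP, map_sum, ← hc]
    refine Finset.sum_congr rfl fun j _ => ?_
    rw [map_mul, aeval_C, map_pow, aeval_X, Algebra.smul_def]
  have hdvd : cyclotomic (p ^ e) ℚ ∣ P := by
    rw [cyclotomic_eq_minpoly_rat hprim (pow_pos hp.pos e)]
    exact minpoly.dvd ℚ ζ haeval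
  obtain ⟨Q, hQ⟩ := hdvd
  have hPdeg : P.natDegree ≤ p ^ e - 1 := by
    rw [hP]
    refine natDegree_sum_le_of_forall_le _ _ fun j _ => ?_
    refine (natDegree_C_mul_le _ _).trans ?_
    rw [natDegree_X_pow]
    have := hlt j
    omega
  have hΦdeg : (cyclotomic (p ^ e) ℚ).natDegree = q * (p - 1) := by
    rw [natDegree_cyclotomic, Nat.totient_prime_pow hp (by omega)]
  have hQdeg : Q.natDegree ≤ q - 1 := by
    rcases eq_or_ne Q 0 with h | h
    · simp [h]
    · have hΦ0 : cyclotomic (p ^ e) ℚ ≠ 0 := cyclotomic_ne_zero _ ℚ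
      have hmul := natDegree_mul hΦ0 h
      rw [← hQ, hΦdeg] at hmul
      omega
  have hΦ : cyclotomic (p ^ e) ℚ = ∑ i ∈ Finset.range p, ((X : ℚ[X]) ^ q) ^ i := by
    have h := cyclotomic_prime_pow_eq_geom_sum (R := ℚ) (n := e - 1) hp
    rwa [show e - 1 + 1 = e by omega] at h
  have key : ∀ m, m < p ^ e → P.coeff m = Q.coeff (m % q) := by
    intro m hm
    have hdiv : q * (m / q) + m % q = m := Nat.div_add_mod m q
    have hmod : m % q < q := Nat.mod_lt _ hq0
    have hdm : m / q < p := by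
      rw [Nat.div_lt_iff_lt_mul hq0, mul_comm]
      omega
    rw [hQ, hΦ, Finset.sum_mul, finset_sum_coeff]
    have hterm : ∀ i, (((X : ℚ[X]) ^ q) ^ i * Q).coeff m
        = if q * i ≤ m then Q.coeff (m - q * i) else 0 := by
      intro i
      rw [← pow_mul, mul_comm, coeff_mul_X_pow']
    rw [Finset.sum_eq_single (m / q)]
    · rw [hterm, if_pos (by omega : q * (m / q) ≤ m)]
      congr 1
      omega
    · intro i hi hne
      rw [hterm]
      rcases lt_or_gt_of_ne hne with hlt' | hgt
      · have hle : q * i + q ≤ q * (m / q) := by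
          have := Nat.mul_le_mul_left q (Nat.succ_le_of_lt hlt')
          rwa [Nat.mul_succ] at this
        rw [if_pos (by omega)]
        exact coeff_eq_zero_of_natDegree_lt (by omega)
      · have hle : q * (m / q) + q ≤ q * i := by
          have := Nat.mul_le_mul_left q (Nat.succ_le_of_lt hgt)
          rwa [Nat.mul_succ] at this
        rw [if_neg (by omega)]
    · intro h
      exact absurd (Finset.mem_range.mpr hdm) h
  have hexists : ∀ k, k < p → ∃ j : Fin s, l j = l i0 % q + q * k := by
    intro k hk
    have h1 : l i0 % q < q := Nat.mod_lt _ hq0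
    have h2 : q * k ≤ q * (p - 1) := Nat.mul_le_mul_left q (by omega)
    have hmk : l i0 % q + q * k < p ^ e := by omega
    have hco : P.coeff (l i0 % q + q * k) = c i0 := by
      rw [key _ hmk, Nat.add_mul_mod_self_left, Nat.mod_mod_of_dvd _ dvd_rfl,
        ← key _ (hlt i0), hcoeffl]
    by_contra hno
    push_neg at hno
    rw [hcoeffP] at hco
    rw [Finset.sum_eq_zero (fun j _ => by simp [hno j])] at hco
    exact hci hco.symm
  choose f hf using hexists
  have hcard : p ≤ (Finset.univ.filter
      (fun j => l j % q = l i0 % q)).card := by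
    have h := Finset.card_le_card_of_injOn
      (s := (Finset.univ : Finset (Fin p)))
      (t := Finset.univ.filter (fun j => l j % q = l i0 % q))
      (fun k : Fin p => f k k.2) ?_ ?_
    · simpa using h
    · intro k _
      simp only [Finset.mem_coe, Finset.mem_filter, Finset.mem_univ, true_and]
      rw [hf k k.2, Nat.add_mul_mod_self_left, Nat.mod_mod_of_dvd _ dvd_rfl]
    · intro k1 _ k2 _ h
      replace h : f k1 k1.2 = f k2 k2.2 := h
      have h1 := hf k1 k1.2
      have h2 := hf k2 k2.2
      rw [h] at h1
      rw [h1] at h2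
      have : (k1 : ℕ) = k2 :=
        Nat.eq_of_mul_eq_mul_left hq0 (by omega : q * (k1 : ℕ) = q * (k2 : ℕ))
      exact Fin.ext this
  exact absurd hcard (not_le.mpr (hres i0))
end

section
/- For every m, d > 0 and a_1,...,a_m ∈ ℚ nonzero, there exist rationals α_{ij} (0 ≤ i ≤ md, 1 ≤ j ≤ m) and β_{ij} (0 ≤ i ≤ md, 0 ≤ j ≤ d) such that the polynomial identity (a₁u₁ + ... + a_m u_m)^d = Σ_{i=0}^{md} Σ_{j=0}^{d} β_{ij} · ((u₁ + α_{i1})(u₂ + α_{i2})···(u_m + α_{im}))^j holds in ℚ[u₁,...,u_m]. -/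
open Polynomial

/-- Lagrange coefficient extraction constants. -/
lemma lag_exists (N k : ℕ) (hk : k ≤ N) :
    ∃ lam : Fin (N + 1) → ℚ, ∀ n ≤ N,
      ∑ i : Fin (N + 1), lam i * (i : ℚ) ^ n = if n = k then 1 else 0 := by
  set s : Finset ℕ := Finset.range (N + 1) with hs
  set v : ℕ → ℚ := fun i => (i : ℚ) with hv
  have hinj : Set.InjOn v s := fun x _ y _ h => Nat.cast_injective h
  refine ⟨fun i => (Lagrange.basis s v (i : ℕ)).coeff k, fun n hn => ?_⟩
  have hdeg : (X ^ n : ℚ[X]).degree < (s.card : ℕ) := by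
    rw [degree_X_pow, hs, Finset.card_range]
    exact_mod_cast Nat.lt_succ_of_le hn
  have h1 := Lagrange.eq_interpolate (f := (X ^ n : ℚ[X])) hinj hdeg
  have h2 : ((X : ℚ[X]) ^ n).coeff k =
      ∑ i ∈ s, (i : ℚ) ^ n * (Lagrange.basis s v i).coeff k := by
    conv_lhs => rw [h1]
    simp only [Lagrange.interpolate, LinearMap.coe_mk, AddHom.coe_mk, Polynomial.finset_sum_coeff,
      coeff_C_mul, eval_pow, eval_X, hv]
  rw [coeff_X_pow] at h2
  rw [← Fin.sum_univ_eq_sum_range (fun i => (i : ℚ) ^ n * (Lagrange.basis s v i).coeff k)] at h2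
  simp only [mul_comm] at h2 ⊢
  rw [← h2]
  simp [eq_comm]

open Polynomial

lemma extract_coeff {A : Type*} [CommRing A] [Algebra ℚ A] (N k : ℕ) (hk : k ≤ N)
    (lam : Fin (N + 1) → ℚ)
    (hl : ∀ n ≤ N, ∑ i : Fin (N + 1), lam i * (i : ℚ) ^ n = if n = k then 1 else 0)
    (g : A[X]) (hg : g.natDegree ≤ N) :
    g.coeff k = ∑ i : Fin (N + 1), algebraMap ℚ A (lam i) * g.eval (((i : ℕ) : A)) := by
  have heval : ∀ x : A, g.eval x = ∑ n ∈ Finset.range (N + 1), g.coeff n * x ^ n := fun x =>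
    eval_eq_sum_range' (Nat.lt_succ_of_le hg) x
  calc g.coeff k
      = ∑ n ∈ Finset.range (N + 1), g.coeff n * (if n = k then 1 else 0) := by
        rw [Finset.sum_congr rfl (fun n _ => by rw [mul_ite, mul_one, mul_zero]),
          Finset.sum_ite_eq' (Finset.range (N + 1)) k (fun n => g.coeff n)]
        simp [Nat.lt_succ_of_le hk]
    _ = ∑ n ∈ Finset.range (N + 1), g.coeff n *
          algebraMap ℚ A (∑ i : Fin (N + 1), lam i * (i : ℚ) ^ n) := by
        refine Finset.sum_congr rfl fun n hn => ?_
        rw [hl n (Nat.lt_succ_iff.mp (Finset.mem_range.mp hn))]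
        split <;> simp
    _ = ∑ i : Fin (N + 1), algebraMap ℚ A (lam i) * g.eval (((i : ℕ) : A)) := by
        simp only [heval, map_sum, map_mul, map_pow, Finset.mul_sum, Finset.sum_mul]
        rw [Finset.sum_comm]
        refine Finset.sum_congr rfl fun i _ => Finset.sum_congr rfl fun n _ => ?_
        push_cast
        ring

open Polynomial

theorem stmt12 (m d : ℕ) (hm : 0 < m) (hd : 0 < d) (a : Fin m → ℚ) (ha : ∀ i, a i ≠ 0) :
    ∃ (α : Fin (m * d + 1) → Fin m → ℚ) (β : Fin (m * d + 1) → Fin (d + 1) → ℚ),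
      (∑ t, MvPolynomial.C (a t) * MvPolynomial.X t) ^ d =
        ∑ i, ∑ j, MvPolynomial.C (β i j) *
          (∏ t, (MvPolynomial.X t + MvPolynomial.C (α i t))) ^ (j : ℕ) := by
  classical
  set A := MvPolynomial (Fin m) ℚ with hA
  set P : A[X] := ∏ t : Fin m, (X + C (MvPolynomial.C (a t) * MvPolynomial.X t)) with hP
  set h : A[X] := P - X ^ m with hhdef
  -- basic degree facts about P
  have hPmonic : P.Monic := monic_prod_of_monic _ _ fun t _ => monic_X_add_C _
  have hPdeg : P.natDegree = m := by
    rw [hP, natDegree_prod_of_monic _ _ fun t _ => monic_X_add_C _]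
    simp only [natDegree_X_add_C, Finset.sum_const, Finset.card_univ, Fintype.card_fin,
      smul_eq_mul, mul_one]
  -- h has natDegree ≤ m - 1
  have hh : h.natDegree ≤ m - 1 := by
    rw [natDegree_le_iff_coeff_eq_zero]
    intro n hn
    rw [hhdef, coeff_sub, coeff_X_pow]
    by_cases hne : n = m
    · have h1 : P.coeff n = 1 := by
        rw [hne]
        have h2 := hPmonic.coeff_natDegree
        rwa [hPdeg] at h2
      rw [if_pos hne, h1, sub_self]
    · rw [coeff_eq_zero_of_natDegree_lt (by omega : P.natDegree < n)]
      simp [hne]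
  -- coefficient of h at m - 1
  have hc : h.coeff (m - 1) = ∑ t, MvPolynomial.C (a t) * MvPolynomial.X t := by
    rw [hhdef, coeff_sub, coeff_X_pow, if_neg (by omega)]
    rw [hP, Finset.prod_X_add_C_coeff _ _
      (by simp only [Finset.card_univ, Fintype.card_fin]; omega)]
    have hcard : (Finset.univ : Finset (Fin m)).card - (m - 1) = 1 := by
      simp only [Finset.card_univ, Fintype.card_fin]; omega
    rw [hcard, Finset.powersetCard_one]
    simp
  -- g := h ^ d
  have hgdeg : (h ^ d).natDegree ≤ m * d := by
    refine natDegree_pow_le.trans ?_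
    calc d * h.natDegree ≤ d * (m - 1) := Nat.mul_le_mul_left d hh
      _ ≤ m * d := by
        rcases m with _ | m
        · omega
        · simpa [Nat.mul_comm] using Nat.mul_le_mul_left d (Nat.le_succ m)
  have hcg : (h ^ d).coeff (d * (m - 1)) = (∑ t, MvPolynomial.C (a t) * MvPolynomial.X t) ^ d := by
    rw [coeff_pow_of_natDegree_le hh, hc]
  have hkN : d * (m - 1) ≤ m * d := by
    rcases m with _ | m
    · omega
    · calc d * (m + 1 - 1) ≤ d * (m + 1) := Nat.mul_le_mul_left d (by omega)
        _ = (m + 1) * d := Nat.mul_comm _ _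
  obtain ⟨lam, hlam⟩ := lag_exists (m * d) (d * (m - 1)) hkN
  -- the interpolation points
  set Q : Fin (m * d + 1) → A := fun i => ∏ t, (MvPolynomial.X t + MvPolynomial.C ((i : ℚ) / a t))
    with hQ
  set β : Fin (m * d + 1) → Fin (d + 1) → ℚ := fun i j =>
    lam i * ((∏ t, a t) ^ (j : ℕ) * ((-(((i : ℕ) : ℚ)) ^ m) ^ (d - (j : ℕ)) *
      (d.choose (j : ℕ) : ℚ))) with hβ
  have heval : ∀ i : Fin (m * d + 1),
      MvPolynomial.C (lam i) * (h ^ d).eval (((i : ℕ) : A)) =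
      ∑ j : Fin (d + 1), MvPolynomial.C (β i j) * (Q i) ^ (j : ℕ) := by
    intro i
    have hnat : (((i : ℕ) : A)) = MvPolynomial.C (((i : ℕ) : ℚ)) := (map_natCast _ _).symm
    have hfac : ∀ t : Fin m, (((i : ℕ) : A)) + MvPolynomial.C (a t) * MvPolynomial.X t
        = MvPolynomial.C (a t) * (MvPolynomial.X t + MvPolynomial.C ((i : ℚ) / a t)) := by
      intro t
      have h1 : a t * ((i : ℚ) / a t) = ((i : ℕ) : ℚ) := by
        rw [mul_comm, div_mul_cancel₀ _ (ha t)]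
      rw [mul_add, ← MvPolynomial.C_mul, h1, hnat]; ring
    have hevg : (h ^ d).eval (((i : ℕ) : A)) =
        ((MvPolynomial.C (∏ t, a t) * Q i) + (-(MvPolynomial.C ((((i : ℕ) : ℚ)) ^ m)))) ^ d := by
      rw [hhdef, hP]
      simp only [eval_pow, eval_sub, eval_prod, eval_add, eval_X, eval_C]
      congr 1
      rw [sub_eq_add_neg]
      congr 1
      · rw [Finset.prod_congr rfl fun t _ => hfac t, Finset.prod_mul_distrib, map_prod, hQ]
      · rw [hnat, ← map_pow]
    rw [hevg, add_pow, Finset.mul_sum, ← Fin.sum_univ_eq_sum_range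
      (fun j => MvPolynomial.C (lam i) *
        ((MvPolynomial.C (∏ t, a t) * Q i) ^ j * (-(MvPolynomial.C ((((i : ℕ) : ℚ)) ^ m))) ^ (d - j)
          * (d.choose j : A)))]
    refine Finset.sum_congr rfl fun j _ => ?_
    have hcj : ((d.choose (j : ℕ) : ℕ) : A) = MvPolynomial.C ((d.choose (j : ℕ) : ℚ)) := by
      rw [map_natCast (MvPolynomial.C : ℚ →+* A)]
    rw [mul_pow, ← map_neg, ← map_pow, ← map_pow, hcj, hβ]
    simp only [map_mul, map_pow, map_neg]
    ring
  -- final assembly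
  refine ⟨fun i t => (i : ℚ) / a t, β, ?_⟩
  calc (∑ t, MvPolynomial.C (a t) * MvPolynomial.X t) ^ d
      = (h ^ d).coeff (d * (m - 1)) := hcg.symm
    _ = ∑ i : Fin (m * d + 1), algebraMap ℚ A (lam i) * (h ^ d).eval (((i : ℕ) : A)) :=
        extract_coeff (m * d) (d * (m - 1)) hkN lam hlam (h ^ d) hgdeg
    _ = ∑ i, ∑ j, MvPolynomial.C (β i j) * (Q i) ^ (j : ℕ) := by
        rw [MvPolynomial.algebraMap_eq]
        exact Finset.sum_congr rfl fun i _ => heval i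
end

section
/- For every n ∈ ℕ whose odd part is divisible by at most two distinct odd primes (i.e., n = p^{k₁} q^{k₂} 2^{k₃} for odd primes p, q and k₁,k₂,k₃ ≥ 0), every coefficient of the n-th cyclotomic polynomial Φ_n lies in {−1, 0, 1}. -/
open Polynomial Finset

namespace Stmt14Aux

lemma coeff_sum_X_pow {α : Type*} [DecidableEq α] (s : Finset α) (e : α → ℕ)
    (he : ∀ x ∈ s, ∀ y ∈ s, e x = e y → x = y) (k : ℕ) :
    (∑ x ∈ s, (X : ℤ[X]) ^ (e x)).coeff k = 0 ∨ (∑ x ∈ s, (X : ℤ[X]) ^ (e x)).coeff k = 1 := by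
  classical
  rw [finset_sum_coeff]
  simp_rw [coeff_X_pow]
  rw [Finset.sum_boole]
  have hcard : (s.filter (fun x => k = e x)).card ≤ 1 := by
    apply Finset.card_le_one.mpr
    intro x hx y hy
    simp only [Finset.mem_filter] at hx hy
    exact he x hx.1 y hy.1 (hx.2.symm.trans hy.2)
  interval_cases h : (s.filter (fun x => k = e x)).card
  · left; simp [h]
  · right; simp [h]

lemma exp_inj {p q : ℕ} (cop : Nat.Coprime p q) {i j i' j' : ℕ} (hi : i < q) (hi' : i' < q)
    (h : p * i + q * j = p * i' + q * j') : i = i' ∧ j = j' := by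
  have hq0 : 0 < q := by omega
  have h1 : (p * i) % q = (p * i') % q := by
    have e1 : (p * i + q * j) % q = (p * i) % q := by
      rw [mul_comm q j, Nat.add_mul_mod_self_right]
    have e2 : (p * i' + q * j') % q = (p * i') % q := by
      rw [mul_comm q j', Nat.add_mul_mod_self_right]
    rw [← e1, ← e2, h]
  have hii : i = i' := by
    have := Nat.ModEq.cancel_left_of_coprime (by rwa [Nat.coprime_comm] at cop) h1
    rwa [Nat.ModEq, Nat.mod_eq_of_lt hi, Nat.mod_eq_of_lt hi'] at this
  subst hii
  refine ⟨rfl, ?_⟩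
  have := Nat.add_left_cancel h
  exact Nat.eq_of_mul_eq_mul_left hq0 this

/-- The coefficients of a product of two "geometric-type" sums
`(∑ i<t, X^(p i)) * (∑ j<u, X^(q j))` with `t ≤ q`, are `0` or `1`. -/
lemma coeff_AB {p q : ℕ} (cop : Nat.Coprime p q) (t u : ℕ) (ht : t ≤ q) (hu : u ≤ p) (k : ℕ) :
    ((∑ i ∈ range t, ((X : ℤ[X]) ^ p) ^ i) * (∑ j ∈ range u, ((X : ℤ[X]) ^ q) ^ j)).coeff k = 0 ∨
    ((∑ i ∈ range t, ((X : ℤ[X]) ^ p) ^ i) * (∑ j ∈ range u, ((X : ℤ[X]) ^ q) ^ j)).coeff k = 1 := by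
  have hAB : (∑ i ∈ range t, ((X : ℤ[X]) ^ p) ^ i) * (∑ j ∈ range u, ((X : ℤ[X]) ^ q) ^ j)
      = ∑ x ∈ (range t) ×ˢ (range u), (X : ℤ[X]) ^ (p * x.1 + q * x.2) := by
    rw [Finset.sum_mul_sum, Finset.sum_product]
    simp_rw [← pow_mul, ← pow_add]
  rw [hAB]
  apply coeff_sum_X_pow
  rintro ⟨i, j⟩ hx ⟨i', j'⟩ hy hxy
  simp only [Finset.mem_product, Finset.mem_range] at hx hy
  obtain ⟨h1, h2⟩ := exp_inj cop (lt_of_lt_of_le hx.1 ht) (lt_of_lt_of_le hy.1 ht) hxy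
  exact Prod.ext h1 h2

lemma flat_pq {p q : ℕ} (hp : p.Prime) (hq : q.Prime) (hpq : p ≠ q) (k : ℕ) :
    (cyclotomic (p * q) ℤ).coeff k = -1 ∨ (cyclotomic (p * q) ℤ).coeff k = 0 ∨
      (cyclotomic (p * q) ℤ).coeff k = 1 := by
  have cop : Nat.Coprime p q := (Nat.coprime_primes hp hq).mpr hpq
  have hp1' : 1 < p := hp.one_lt
  have hq1' : 1 < q := hq.one_lt
  -- get the representation r*p + s*q = (p-1)*(q-1)
  obtain ⟨p', rfl⟩ : ∃ p', p = p' + 1 := ⟨p - 1, by omega⟩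
  obtain ⟨q', rfl⟩ : ∃ q', q = q' + 1 := ⟨q - 1, by omega⟩
  set p := p' + 1
  set q := q' + 1
  have hp1 : 1 < p := hp.one_lt
  have hq1 : 1 < q := hq.one_lt
  have hfr := frobeniusNumber_pair cop hp1 hq1
  have hmem : p' * q' ∈ AddSubmonoid.closure ({p, q} : Set ℕ) := by
    by_contra hc
    have hle := hfr.2 hc
    have : p + q ≤ p * q := Nat.add_le_mul hp1 hq1
    have : p * q - p - q < p' * q' := by
      have : p * q = p' * q' + p' + q' + 1 := by ring
      omega
    omega
  obtain ⟨r, s, hrs⟩ := (AddSubmonoid.mem_closure_pair p q _).mp hmem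
  simp only [smul_eq_mul] at hrs
  have hr : r < q := by
    by_contra hc
    nlinarith [Nat.mul_le_mul_right p (not_lt.mp hc), show p * q = p' * q' + p' + q' + 1 by ring]
  have hs : s < p := by
    by_contra hc
    nlinarith [Nat.mul_le_mul_right q (not_lt.mp hc), show p * q = p' * q' + p' + q' + 1 by ring]
  -- the polynomials
  set A : ℤ[X] := ∑ i ∈ range (r + 1), ((X : ℤ[X]) ^ p) ^ i with hA_def
  set B : ℤ[X] := ∑ j ∈ range (s + 1), ((X : ℤ[X]) ^ q) ^ j with hB_def
  set Cp : ℤ[X] := ∑ i ∈ range (q - 1 - r), ((X : ℤ[X]) ^ p) ^ i with hC_def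
  set Dp : ℤ[X] := ∑ j ∈ range (p - 1 - s), ((X : ℤ[X]) ^ q) ^ j with hD_def
  set a : ℤ[X] := ((X : ℤ[X]) ^ p) ^ (r + 1) with ha_def
  set b : ℤ[X] := ((X : ℤ[X]) ^ q) ^ (s + 1) with hb_def
  set c : ℤ[X] := ((X : ℤ[X]) ^ p) ^ (q - 1 - r) with hc_def
  set d : ℤ[X] := ((X : ℤ[X]) ^ q) ^ (p - 1 - s) with hd_def
  set N : ℤ[X] := (X : ℤ[X]) ^ (p * q) with hN_def
  have h1 : A * ((X : ℤ[X]) ^ p - 1) = a - 1 := geom_sum_mul _ _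
  have h2 : B * ((X : ℤ[X]) ^ q - 1) = b - 1 := geom_sum_mul _ _
  have h3 : Cp * ((X : ℤ[X]) ^ p - 1) = c - 1 := geom_sum_mul _ _
  have h4 : Dp * ((X : ℤ[X]) ^ q - 1) = d - 1 := geom_sum_mul _ _
  have h5 : a * c = N := by
    rw [ha_def, hc_def, hN_def, ← pow_add, ← pow_mul]
    congr 1
    have : r + 1 + (q - 1 - r) = q := by omega
    rw [this, mul_comm]
  have h6 : b * d = N := by
    rw [hb_def, hd_def, hN_def, ← pow_add, ← pow_mul]
    congr 1
    have : s + 1 + (p - 1 - s) = p := by omega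
    rw [this, mul_comm q p]
  have h7 : a * b = N * X := by
    rw [ha_def, hb_def, hN_def, ← pow_mul, ← pow_mul, ← pow_add, ← pow_succ]
    congr 1
    nlinarith [hrs, show p * q = p' * q' + p' + q' + 1 by ring, show p = p' + 1 from rfl,
      show q = q' + 1 from rfl]
  have hab0 : a * b ≠ 0 := by
    rw [h7, hN_def]
    exact mul_ne_zero (pow_ne_zero _ X_ne_zero) X_ne_zero
  -- the key polynomial identity
  have key : (A * B - X * (Cp * Dp)) * (((X : ℤ[X]) ^ p - 1) * ((X : ℤ[X]) ^ q - 1))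
      = ((X : ℤ[X]) ^ (p * q) - 1) * (X - 1) := by
    apply mul_left_cancel₀ hab0
    rw [show ((X : ℤ[X]) ^ (p * q)) = N from rfl]
    linear_combination (a * b * (B * ((X : ℤ[X]) ^ q - 1))) * h1
      + (a * b * (a - 1)) * h2
      - (a * b * X * (Dp * ((X : ℤ[X]) ^ q - 1))) * h3
      - (a * b * X * (c - 1)) * h4
      - (X * (b * d - b)) * h5
      - (X * (N - a)) * h6
      + (a * b + N * X - a - b + 1 - X - (N - 1) * (X - 1)) * h7
  -- cyclotomic relation
  have hPQpos : 0 < p * q := by positivity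
  have hdiv : (p * q).divisors = {1, p, q, p * q} := by
    rw [Nat.divisors_mul, hp.divisors, hq.divisors]
    ext x
    simp only [Finset.mem_mul, Finset.mem_insert, Finset.mem_singleton]
    constructor
    · rintro ⟨y, hy, z, hz, rfl⟩
      rcases hy with rfl | rfl <;> rcases hz with rfl | rfl <;> simp
    · rintro (rfl | rfl | rfl | rfl)
      · exact ⟨1, Or.inl rfl, 1, Or.inl rfl, by ring⟩
      · exact ⟨p, Or.inr rfl, 1, Or.inl rfl, by ring⟩
      · exact ⟨1, Or.inl rfl, q, Or.inr rfl, by ring⟩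
      · exact ⟨p, Or.inr rfl, q, Or.inr rfl, rfl⟩
  have hprodpq : (cyclotomic 1 ℤ) * (cyclotomic p ℤ) * (cyclotomic q ℤ) * (cyclotomic (p * q) ℤ)
      = (X : ℤ[X]) ^ (p * q) - 1 := by
    have := prod_cyclotomic_eq_X_pow_sub_one hPQpos ℤ
    rw [hdiv] at this
    have h1p : (1 : ℕ) ≠ p := by omega
    have h1q : (1 : ℕ) ≠ q := by omega
    have h1pq : (1 : ℕ) ≠ p * q := by nlinarith
    have hppq : p ≠ p * q := by nlinarith
    have hqpq : q ≠ p * q := by nlinarith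
    rw [Finset.prod_insert (by simp [h1p, h1q, h1pq]),
      Finset.prod_insert (by simp [hpq, hppq]),
      Finset.prod_insert (by simp [hqpq]), Finset.prod_singleton] at this
    rw [← this]; ring
  have hprodp : (cyclotomic 1 ℤ) * (cyclotomic p ℤ) = (X : ℤ[X]) ^ p - 1 := by
    have := prod_cyclotomic_eq_X_pow_sub_one hp.pos ℤ
    rw [hp.divisors, Finset.prod_insert (by simp; omega), Finset.prod_singleton] at this
    exact this
  have hprodq : (cyclotomic 1 ℤ) * (cyclotomic q ℤ) = (X : ℤ[X]) ^ q - 1 := by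
    have := prod_cyclotomic_eq_X_pow_sub_one hq.pos ℤ
    rw [hq.divisors, Finset.prod_insert (by simp; omega), Finset.prod_singleton] at this
    exact this
  have hone : cyclotomic 1 ℤ = X - 1 := cyclotomic_one ℤ
  have cy : (cyclotomic (p * q) ℤ) * (((X : ℤ[X]) ^ p - 1) * ((X : ℤ[X]) ^ q - 1))
      = ((X : ℤ[X]) ^ (p * q) - 1) * (X - 1) := by
    rw [← hprodp, ← hprodq, ← hprodpq, ← hone]; ring
  -- cancel
  have hnz : (((X : ℤ[X]) ^ p - 1) * ((X : ℤ[X]) ^ q - 1)) ≠ 0 := by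
    apply mul_ne_zero
    · simpa using X_pow_sub_C_ne_zero hp.pos (1 : ℤ)
    · simpa using X_pow_sub_C_ne_zero hq.pos (1 : ℤ)
  have hcyc : cyclotomic (p * q) ℤ = A * B - X * (Cp * Dp) :=
    mul_right_cancel₀ hnz (cy.trans key.symm)
  -- conclude on coefficients
  have hAB := coeff_AB cop (r + 1) (s + 1) (by omega) (by omega) k
  have hCD : ((X : ℤ[X]) * (Cp * Dp)).coeff k = 0 ∨ ((X : ℤ[X]) * (Cp * Dp)).coeff k = 1 := by
    rcases k with _ | k'
    · left
      rw [mul_coeff_zero, coeff_X_zero, zero_mul]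
    · have := coeff_AB cop (q - 1 - r) (p - 1 - s) (by omega) (by omega) k'
      rw [show ((X : ℤ[X]) * (Cp * Dp)) = (Cp * Dp) * X by ring, coeff_mul_X]
      exact this
  rw [hcyc, coeff_sub]
  rcases hAB with h | h <;> rcases hCD with h' | h' <;> rw [h, h'] <;> norm_num



lemma prim_neg₁ {μ : ℂ} {m : ℕ} (hm : Odd m) (h : IsPrimitiveRoot μ m) :
    IsPrimitiveRoot (-μ) (2 * m) := by
  have hcop : Nat.Coprime 2 m := hm.coprime_two_left
  constructor
  · rw [pow_mul, neg_sq, ← pow_mul, mul_comm 2 m, pow_mul, h.pow_eq_one, one_pow]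
  · intro l hl
    rw [neg_pow] at hl
    rcases Nat.even_or_odd l with he | ho
    · rw [he.neg_one_pow, one_mul] at hl
      exact Nat.Coprime.mul_dvd_of_dvd_of_dvd hcop he.two_dvd (h.dvd_of_pow_eq_one l hl)
    · exfalso
      rw [ho.neg_one_pow] at hl
      have hμl : μ ^ l = -1 := by linear_combination -hl
      have h2l : μ ^ (2 * l) = 1 := by rw [mul_comm, pow_mul, hμl]; ring
      have hdl : m ∣ l :=
        (Nat.Coprime.dvd_of_dvd_mul_left hcop.symm) (h.dvd_of_pow_eq_one _ h2l)
      obtain ⟨t, rfl⟩ := hdl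
      rw [pow_mul, h.pow_eq_one, one_pow] at hμl
      norm_num at hμl

lemma prim_neg₂ {ζ : ℂ} {m : ℕ} (hm : Odd m) (h : IsPrimitiveRoot ζ (2 * m)) :
    IsPrimitiveRoot (-ζ) m := by
  have hm0 : m ≠ 0 := by rintro rfl; simp at hm
  have hζm : ζ ^ m = -1 := by
    have h2 : (ζ ^ m) ^ 2 = 1 := by
      rw [← pow_mul, mul_comm m 2, h.pow_eq_one]
    rcases sq_eq_one_iff.mp h2 with h1 | h1
    · exfalso
      have := h.dvd_of_pow_eq_one m h1
      have := Nat.le_of_dvd (Nat.pos_of_ne_zero hm0) this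
      omega
    · exact h1
  constructor
  · rw [hm.neg_pow, hζm, neg_neg]
  · intro l hl
    rw [neg_pow] at hl
    rcases Nat.even_or_odd l with he | ho
    · rw [he.neg_one_pow, one_mul] at hl
      have := h.dvd_of_pow_eq_one l hl
      exact dvd_trans (Dvd.intro_left 2 rfl) this
    · rw [ho.neg_one_pow] at hl
      have hζl : ζ ^ l = -1 := by linear_combination -hl
      have h2l : ζ ^ (2 * l) = 1 := by rw [mul_comm, pow_mul, hζl]; ring
      have := h.dvd_of_pow_eq_one _ h2l
      exact (mul_dvd_mul_iff_left (two_ne_zero)).mp this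

lemma cyclotomic_two_mul_eq_comp {m : ℕ} (hm : Odd m) (hm3 : 3 ≤ m) :
    cyclotomic (2 * m) ℤ = (cyclotomic m ℤ).comp (-X) := by
  apply Polynomial.map_injective (Int.castRingHom ℂ) Int.cast_injective
  rw [map_cyclotomic, Polynomial.map_comp, map_cyclotomic]
  simp only [Polynomial.map_neg, Polynomial.map_X]
  have hm0 : m ≠ 0 := by omega
  obtain hζ := Complex.isPrimitiveRoot_exp m hm0
  have hζ2 := prim_neg₁ hm hζ
  rw [cyclotomic_eq_prod_X_sub_primitiveRoots hζ2, cyclotomic_eq_prod_X_sub_primitiveRoots hζ]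
  have himg : primitiveRoots (2 * m) ℂ = (primitiveRoots m ℂ).image (fun z => -z) := by
    ext z
    simp only [Finset.mem_image]
    rw [mem_primitiveRoots (by omega)]
    constructor
    · intro hz
      exact ⟨-z, (mem_primitiveRoots (by omega)).mpr (prim_neg₂ hm hz), neg_neg z⟩
    · rintro ⟨w, hw, rfl⟩
      exact prim_neg₁ hm ((mem_primitiveRoots (by omega)).mp hw)
  rw [himg, Finset.prod_image (fun x _ y _ h => neg_injective h)]
  rw [Polynomial.prod_comp]
  simp only [sub_comp, X_comp, C_comp]
  have heven : Even (primitiveRoots m ℂ).card := by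
    rw [(Complex.isPrimitiveRoot_exp m hm0).card_primitiveRoots]
    exact Nat.totient_even (by omega)
  calc ∏ μ ∈ primitiveRoots m ℂ, (X - C (-μ))
      = ∏ μ ∈ primitiveRoots m ℂ, ((-1) * (-X - C μ)) := by
        apply Finset.prod_congr rfl; intro μ _; rw [map_neg]; ring
    _ = (-1) ^ (primitiveRoots m ℂ).card * ∏ μ ∈ primitiveRoots m ℂ, (-X - C μ) := by
        rw [Finset.prod_mul_distrib, Finset.prod_const]
    _ = ∏ μ ∈ primitiveRoots m ℂ, (-X - C μ) := by rw [heven.neg_one_pow, one_mul]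

lemma coeff_comp_neg_X (f : ℤ[X]) (i : ℕ) : (f.comp (-X)).coeff i = (-1) ^ i * f.coeff i := by
  induction f using Polynomial.induction_on' with
  | add p q hp hq => rw [add_comp, coeff_add, hp, hq, coeff_add, mul_add]
  | monomial n a =>
    rw [← C_mul_X_pow_eq_monomial, mul_comp, C_comp, pow_comp, X_comp, neg_pow,
      show ((-1 : ℤ[X])) ^ n = C ((-1) ^ n) by rw [← C_1, ← C_neg, ← C_pow],
      ← mul_assoc, ← C_mul]
    rw [coeff_C_mul, coeff_X_pow, coeff_C_mul, coeff_X_pow]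
    by_cases h : n = i
    · subst h; simp [mul_comm]
    · simp [Ne.symm h]


lemma flat_prime {p : ℕ} (hp : p.Prime) (i : ℕ) :
    (cyclotomic p ℤ).coeff i = -1 ∨ (cyclotomic p ℤ).coeff i = 0 ∨
      (cyclotomic p ℤ).coeff i = 1 := by
  haveI := Fact.mk hp
  rw [cyclotomic_prime]
  rcases coeff_sum_X_pow (range p) (fun j => j) (fun x _ y _ h => h) i with h | h
  · right; left; exact h
  · right; right; exact h

lemma flat_one (i : ℕ) :
    (cyclotomic 1 ℤ).coeff i = -1 ∨ (cyclotomic 1 ℤ).coeff i = 0 ∨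
      (cyclotomic 1 ℤ).coeff i = 1 := by
  rw [cyclotomic_one]
  rcases i with _ | _ | i <;> simp [coeff_one, coeff_X]

lemma flat_two_mul {m : ℕ} (hm : Odd m)
    (h : ∀ i, (cyclotomic m ℤ).coeff i = -1 ∨ (cyclotomic m ℤ).coeff i = 0 ∨
      (cyclotomic m ℤ).coeff i = 1) :
    ∀ i, (cyclotomic (2 * m) ℤ).coeff i = -1 ∨ (cyclotomic (2 * m) ℤ).coeff i = 0 ∨
      (cyclotomic (2 * m) ℤ).coeff i = 1 := by
  intro i
  by_cases hm1 : m = 1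
  · subst hm1
    norm_num [cyclotomic_two]
    rcases i with _ | _ | i <;> simp [coeff_one, coeff_X]
  · have hm3 : 3 ≤ m := by
      have := Nat.odd_iff.mp hm; omega
    rw [cyclotomic_two_mul_eq_comp hm hm3, coeff_comp_neg_X]
    rcases Nat.even_or_odd i with hi | hi
    · rw [hi.neg_one_pow, one_mul]; exact h i
    · rw [hi.neg_one_pow]
      rcases h i with h' | h' | h' <;> rw [h'] <;> norm_num

lemma flat_main (p q : ℕ) (hp : p.Prime) (hq : q.Prime) (hpo : Odd p) (hqo : Odd q)
    (hpq : p ≠ q) :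
    ∀ n, ∀ a b c : ℕ, n = p ^ a * q ^ b * 2 ^ c →
      ∀ i, (cyclotomic n ℤ).coeff i = -1 ∨ (cyclotomic n ℤ).coeff i = 0 ∨
        (cyclotomic n ℤ).coeff i = 1 := by
  intro n
  induction n using Nat.strong_induction_on with
  | _ n IH =>
  intro a b c hn i
  have hp1 := hp.one_lt
  have hq1 := hq.one_lt
  by_cases ha : 2 ≤ a
  · obtain ⟨a', rfl⟩ : ∃ a', a = a' + 2 := ⟨a - 2, by omega⟩
    set n' := p ^ (a' + 1) * q ^ b * 2 ^ c with hn'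
    have hdvd : p ∣ n' := ⟨p ^ a' * q ^ b * 2 ^ c, by rw [hn']; ring⟩
    have hn'pos : 0 < n' := by positivity
    have hneq : n = n' * p := by rw [hn, hn']; ring
    have hlt : n' < n := by
      rw [hneq]; nlinarith
    rw [hneq, ← cyclotomic_expand_eq_cyclotomic hp hdvd, coeff_expand hp.pos]
    split_ifs with hdvd'
    · exact IH n' hlt (a' + 1) b c rfl _
    · right; left; rfl
  · by_cases hb : 2 ≤ b
    · obtain ⟨b', rfl⟩ : ∃ b', b = b' + 2 := ⟨b - 2, by omega⟩
      set n' := p ^ a * q ^ (b' + 1) * 2 ^ c with hn'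
      have hdvd : q ∣ n' := ⟨p ^ a * q ^ b' * 2 ^ c, by rw [hn']; ring⟩
      have hn'pos : 0 < n' := by positivity
      have hneq : n = n' * q := by rw [hn, hn']; ring
      have hlt : n' < n := by rw [hneq]; nlinarith
      rw [hneq, ← cyclotomic_expand_eq_cyclotomic hq hdvd, coeff_expand hq.pos]
      split_ifs with hdvd'
      · exact IH n' hlt a (b' + 1) c rfl _
      · right; left; rfl
    · by_cases hc : 2 ≤ c
      · obtain ⟨c', rfl⟩ : ∃ c', c = c' + 2 := ⟨c - 2, by omega⟩
        set n' := p ^ a * q ^ b * 2 ^ (c' + 1) with hn'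
        have hdvd : 2 ∣ n' := ⟨p ^ a * q ^ b * 2 ^ c', by rw [hn']; ring⟩
        have hn'pos : 0 < n' := by positivity
        have hneq : n = n' * 2 := by rw [hn, hn']; ring
        have hlt : n' < n := by rw [hneq]; omega
        rw [hneq, ← cyclotomic_expand_eq_cyclotomic Nat.prime_two hdvd,
          coeff_expand (by norm_num : (0:ℕ) < 2)]
        split_ifs with hdvd'
        · exact IH n' hlt a b (c' + 1) rfl _
        · right; left; rfl
      · -- now a ≤ 1, b ≤ 1, c ≤ 1
        interval_cases c
        · -- c = 0
          interval_cases a <;> interval_cases b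
          · -- n = 1
            have : n = 1 := by rw [hn]; ring
            rw [this]; exact flat_one i
          · have : n = q := by rw [hn]; ring
            rw [this]; exact flat_prime hq i
          · have : n = p := by rw [hn]; ring
            rw [this]; exact flat_prime hp i
          · have : n = p * q := by rw [hn]; ring
            rw [this]
            rcases flat_pq hp hq hpq i with h | h
            · left; exact h
            · right; exact h
        · -- c = 1
          set m := p ^ a * q ^ b with hm_def
          have hmodd : Odd m := Odd.mul hpo.pow hqo.pow
          have hmpos : 0 < m := by positivity
          have hneq : n = 2 * m := by rw [hn, hm_def]; ring
          have hml : m < n := by omega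
          have hflat := IH m hml a b 0 (by rw [hm_def]; ring)
          rw [hneq]
          exact flat_two_mul hmodd hflat i

end Stmt14Aux


theorem stmt14 (n p q k₁ k₂ k₃ : ℕ) (hp : p.Prime) (hq : q.Prime)
    (hpo : Odd p) (hqo : Odd q) (hn : n = p ^ k₁ * q ^ k₂ * 2 ^ k₃) :
    ∀ i, (Polynomial.cyclotomic n ℤ).coeff i ∈ ({-1, 0, 1} : Set ℤ) := by
  intro i
  simp only [Set.mem_insert_iff, Set.mem_singleton_iff]
  by_cases hpq : p = q
  · subst hpq
    obtain ⟨q', hq'p, hq'o, hq'ne⟩ : ∃ q', q'.Prime ∧ Odd q' ∧ p ≠ q' := by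
      rcases eq_or_ne p 3 with rfl | h
      · exact ⟨5, by norm_num, by decide, by norm_num⟩
      · exact ⟨3, by norm_num, by decide, h⟩
    exact Stmt14Aux.flat_main p q' hp hq'p hpo hq'o hq'ne n (k₁ + k₂) 0 k₃
      (by rw [hn]; ring) i
  · exact Stmt14Aux.flat_main p q hp hq hpo hqo hpq n k₁ k₂ k₃ hn i
end
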